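/- arXiv:2601.01707 — 11 statements merged into one kernel-verified Lean document; each statement's English description precedes it below -/
import Mathlib

section
/- (Theorem 4.1, classification of homogeneous 2-local extensions of η₁.) Let R = ℤ[t^{±1}] be the ring of Laurent polynomials over ℤ (Mathlib: LaurentPolynomial ℤ) with t its variable, let n ≥ 3, and let Ŝ = !![1−t, t; 2−t, t−1]. Suppose A and B are invertible 2×2 matrices over R such that the n×n matrices S_i := L_i(Ŝ), T_i := L_i(A), V_i := L_i(B) for 1 ≤ i ≤ n−1 satisfy all the defining relations of VST_n, namely: S_i² = 1 and V_i² = 1 for all i; T_i S_i = S_i T_i for all i; S_i S_j T_i = T_j S_i S_j, V_i V_j V_i = V_j V_i V_j, V_i S_j V_i = V_j S_i V_j, and V_i T_j V_i = V_j T_i V_j for |i−j| = 1; and any two of the matrices S_i, T_i, V_i, S_j, T_j, V_j commute when |i−j| ≥ 2. Then A = I₂ (the 2×2 identity matrix) and there exists a unit v of R such that B = !![0, v; v⁻¹, 0]. -/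
/-- `Lmat n i M` is the `n × n` matrix that agrees with the identity matrix outside
rows and columns `i, i+1` (0-indexed) and whose `2 × 2` block in rows/columns
`i, i+1` equals `M`. -/
def Lmat {R : Type*} [Zero R] [One R] (n : ℕ) (i : ℕ) (M : Matrix (Fin 2) (Fin 2) R) :
    Matrix (Fin n) (Fin n) R :=
  Matrix.of fun a b =>
    if a.val = i ∧ b.val = i then M 0 0
    else if a.val = i ∧ b.val = i + 1 then M 0 1
    else if a.val = i + 1 ∧ b.val = i then M 1 0
    else if a.val = i + 1 ∧ b.val = i + 1 then M 1 1
    else if a.val = b.val then 1 else 0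

section Aux

variable {R : Type*} [CommRing R]

/-- The index equivalence `Fin 3 ⊕ Fin (n-3) ≃ Fin n`. -/
def emb3 (n : ℕ) (hn : 3 ≤ n) : Fin 3 ⊕ Fin (n - 3) ≃ Fin n :=
  finSumFinEquiv.trans (finCongr (by omega))

lemma emb3_inl (n : ℕ) (hn : 3 ≤ n) (x : Fin 3) : ((emb3 n hn) (Sum.inl x)).val = x.val := by
  simp [emb3]

lemma emb3_inr (n : ℕ) (hn : 3 ≤ n) (x : Fin (n - 3)) :
    ((emb3 n hn) (Sum.inr x)).val = 3 + x.val := by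
  simp [emb3]

/-- Embedding of `3 × 3` matrices as `n × n` matrices extending by the identity. -/
def embMat (n : ℕ) (hn : 3 ≤ n) (C : Matrix (Fin 3) (Fin 3) R) : Matrix (Fin n) (Fin n) R :=
  Matrix.reindex (emb3 n hn) (emb3 n hn) (Matrix.fromBlocks C 0 0 1)

lemma embMat_mul (n : ℕ) (hn : 3 ≤ n) (X Y : Matrix (Fin 3) (Fin 3) R) :
    embMat n hn X * embMat n hn Y = embMat n hn (X * Y) := by
  unfold embMat
  simp only [Matrix.reindex_apply]
  rw [Matrix.submatrix_mul_equiv, Matrix.fromBlocks_multiply]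
  simp

lemma embMat_one (n : ℕ) (hn : 3 ≤ n) : embMat n hn (1 : Matrix (Fin 3) (Fin 3) R) = 1 := by
  unfold embMat
  rw [Matrix.fromBlocks_one]
  simp [Matrix.reindex_apply, Matrix.submatrix_one_equiv]

lemma embMat_injective (n : ℕ) (hn : 3 ≤ n) {X Y : Matrix (Fin 3) (Fin 3) R}
    (h : embMat n hn X = embMat n hn Y) : X = Y := by
  unfold embMat at h
  have h2 := (Matrix.reindex (emb3 n hn) (emb3 n hn)).injective h
  have h3 := congrArg Matrix.toBlocks₁₁ h2
  simpa [Matrix.toBlocks_fromBlocks₁₁] using h3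

lemma Lmat_eq_embMat (n : ℕ) (hn : 3 ≤ n) (i : ℕ) (hi : i ≤ 1)
    (M : Matrix (Fin 2) (Fin 2) R) :
    Lmat n i M = embMat n hn (Lmat 3 i M) := by
  unfold embMat
  rw [Matrix.reindex_apply]
  ext a b
  rw [Matrix.submatrix_apply]
  obtain ⟨x, rfl⟩ := (emb3 n hn).surjective a
  obtain ⟨y, rfl⟩ := (emb3 n hn).surjective b
  rw [Equiv.symm_apply_apply, Equiv.symm_apply_apply]
  rcases x with x | x <;> rcases y with y | y
  · have hx := emb3_inl n hn x
    have hy := emb3_inl n hn y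
    have hx3 := x.isLt
    have hy3 := y.isLt
    simp only [Lmat, Matrix.of_apply, Matrix.fromBlocks_apply₁₁]
    split_ifs <;> first | rfl | (exfalso; omega)
  · have hx := emb3_inl n hn x
    have hy := emb3_inr n hn y
    simp only [Lmat, Matrix.of_apply, Matrix.fromBlocks_apply₁₂, Matrix.zero_apply]
    split_ifs <;> first | rfl | (exfalso; omega)
  · have hx := emb3_inr n hn x
    have hy := emb3_inl n hn y
    simp only [Lmat, Matrix.of_apply, Matrix.fromBlocks_apply₂₁, Matrix.zero_apply]
    split_ifs <;> first | rfl | (exfalso; omega)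
  · have hx := emb3_inr n hn x
    have hy := emb3_inr n hn y
    simp only [Lmat, Matrix.of_apply, Matrix.fromBlocks_apply₂₂, Matrix.one_apply, Fin.ext_iff]
    split_ifs <;> first | rfl | (exfalso; omega)

lemma Lmat3_zero (M : Matrix (Fin 2) (Fin 2) R) :
    Lmat 3 0 M = !![M 0 0, M 0 1, 0; M 1 0, M 1 1, 0; 0, 0, 1] := by
  ext a b
  fin_cases a <;> fin_cases b <;> simp [Lmat, Matrix.vecHead, Matrix.vecTail]

lemma Lmat3_one (M : Matrix (Fin 2) (Fin 2) R) :
    Lmat 3 1 M = !![1, 0, 0; 0, M 0 0, M 0 1; 0, M 1 0, M 1 1] := by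
  ext a b
  fin_cases a <;> fin_cases b <;> simp [Lmat, Matrix.vecHead, Matrix.vecTail]

end Aux

open LaurentPolynomial in
lemma tsub_one_ne_zero : (T 1 : LaurentPolynomial ℤ) - 1 ≠ 0 := by
  have : (T 1 : LaurentPolynomial ℤ) - 1 = Polynomial.toLaurent (Polynomial.X - 1) := by
    simp [Polynomial.toLaurent_X]
  rw [this, Polynomial.toLaurent_ne_zero]
  simpa using Polynomial.X_sub_C_ne_zero (1 : ℤ)

lemma two_ne_zero_laurent : (2 : LaurentPolynomial ℤ) ≠ 0 := by
  have : (2 : LaurentPolynomial ℤ) = Polynomial.toLaurent 2 :=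
    (map_ofNat Polynomial.toLaurent 2).symm
  rw [this, Polynomial.toLaurent_ne_zero]
  exact two_ne_zero

open LaurentPolynomial in
/-- (Theorem 4.1.) Classification of the homogeneous 2-local representations of `VST_n`
extending the representation `η₁` of the twin group: the `τ`-block must be the identity
and the `ν`-block must be `!![0, v; v⁻¹, 0]` for a unit `v` of `ℤ[t^{±1}]`. -/
theorem classification_eta1_extension (n : ℕ) (hn : 3 ≤ n)
    (A B : Matrix (Fin 2) (Fin 2) (LaurentPolynomial ℤ))
    (hA : IsUnit A) (hB : IsUnit B)
    (Shat : Matrix (Fin 2) (Fin 2) (LaurentPolynomial ℤ))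
    (hShat : Shat = !![1 - T 1, T 1; 2 - T 1, T 1 - 1])
    (hS2 : ∀ i : Fin (n - 1), Lmat n i.val Shat * Lmat n i.val Shat = 1)
    (hV2 : ∀ i : Fin (n - 1), Lmat n i.val B * Lmat n i.val B = 1)
    (hTS : ∀ i : Fin (n - 1), Lmat n i.val A * Lmat n i.val Shat
      = Lmat n i.val Shat * Lmat n i.val A)
    (hSST : ∀ i j : Fin (n - 1), (i.val + 1 = j.val ∨ j.val + 1 = i.val) →
      Lmat n i.val Shat * Lmat n j.val Shat * Lmat n i.val A
        = Lmat n j.val A * Lmat n i.val Shat * Lmat n j.val Shat)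
    (hVVV : ∀ i j : Fin (n - 1), (i.val + 1 = j.val ∨ j.val + 1 = i.val) →
      Lmat n i.val B * Lmat n j.val B * Lmat n i.val B
        = Lmat n j.val B * Lmat n i.val B * Lmat n j.val B)
    (hVSV : ∀ i j : Fin (n - 1), (i.val + 1 = j.val ∨ j.val + 1 = i.val) →
      Lmat n i.val B * Lmat n j.val Shat * Lmat n i.val B
        = Lmat n j.val B * Lmat n i.val Shat * Lmat n j.val B)
    (hVTV : ∀ i j : Fin (n - 1), (i.val + 1 = j.val ∨ j.val + 1 = i.val) →
      Lmat n i.val B * Lmat n j.val A * Lmat n i.val B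
        = Lmat n j.val B * Lmat n i.val A * Lmat n j.val B)
    (hcomm : ∀ i j : Fin (n - 1), (i.val + 2 ≤ j.val ∨ j.val + 2 ≤ i.val) →
      ∀ X ∈ ({Lmat n i.val Shat, Lmat n i.val A, Lmat n i.val B} :
        Set (Matrix (Fin n) (Fin n) (LaurentPolynomial ℤ))),
      ∀ Y ∈ ({Lmat n j.val Shat, Lmat n j.val A, Lmat n j.val B} :
        Set (Matrix (Fin n) (Fin n) (LaurentPolynomial ℤ))),
        X * Y = Y * X) :
    A = 1 ∧ ∃ v : (LaurentPolynomial ℤ)ˣ,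
      B = !![0, (v : LaurentPolynomial ℤ); ((v⁻¹ : (LaurentPolynomial ℤ)ˣ) : LaurentPolynomial ℤ), 0] := by
  -- The `NoZeroDivisors` structure of `ℤ[t^{±1}]`.
  have hu : (T 1 : LaurentPolynomial ℤ) - 1 ≠ 0 := tsub_one_ne_zero
  have hu' : (1 : LaurentPolynomial ℤ) - T 1 ≠ 0 := fun h => hu (by linear_combination -h)
  -- Reduce the three needed relations to `3 × 3` matrices.
  have L0 : ∀ M : Matrix (Fin 2) (Fin 2) (LaurentPolynomial ℤ),
      Lmat n 0 M = embMat n hn (Lmat 3 0 M) := fun M => Lmat_eq_embMat n hn 0 (by omega) M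
  have L1 : ∀ M : Matrix (Fin 2) (Fin 2) (LaurentPolynomial ℤ),
      Lmat n 1 M = embMat n hn (Lmat 3 1 M) := fun M => Lmat_eq_embMat n hn 1 le_rfl M
  have h1 := hSST ⟨0, by omega⟩ ⟨1, by omega⟩ (Or.inl rfl)
  have h2 := hSST ⟨1, by omega⟩ ⟨0, by omega⟩ (Or.inr rfl)
  have h3 := hVSV ⟨0, by omega⟩ ⟨1, by omega⟩ (Or.inl rfl)
  have h4 := hV2 ⟨0, by omega⟩
  simp only [L0, L1, embMat_mul] at h1 h2 h3 h4
  rw [← embMat_one n hn] at h4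
  have h1' := embMat_injective n hn h1
  have h2' := embMat_injective n hn h2
  have h3' := embMat_injective n hn h3
  have h4' := embMat_injective n hn h4
  rw [Lmat3_zero, Lmat3_one, Lmat3_zero, Lmat3_one, hShat] at h1' h2' h3'
  rw [Lmat3_zero] at h4'
  -- extract scalar equations
  have e1 := congrFun (congrFun h1' 1) 0
  have e2 := congrFun (congrFun h1' 0) 0
  have e3 := congrFun (congrFun h1' 1) 1
  have e4 := congrFun (congrFun h2' 0) 1
  have e5 := congrFun (congrFun h3' 1) 1
  have e6 := congrFun (congrFun h4' 0) 0
  have e7 := congrFun (congrFun h4' 1) 1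
  simp [Matrix.mul_apply, Fin.sum_univ_three, Matrix.vecHead, Matrix.vecTail,
    -mul_eq_zero, -mul_eq_one_iff_eq_inv, -mul_eq_one_iff_inv_eq] at e1 e2 e3 e4 e5 e6 e7
  -- the A-part
  have hc : A 1 0 = 0 := by
    have hcc : A 1 0 * ((T 1 : LaurentPolynomial ℤ) - 1) ^ 2 = 0 := by linear_combination -e1
    rcases mul_eq_zero.mp hcc with h | h
    · exact h
    · exact absurd (pow_eq_zero_iff (by norm_num)|>.mp h) hu
  have hb : A 0 1 = 0 := by
    have hbb : A 0 1 * ((T 1 : LaurentPolynomial ℤ) - 1) ^ 2 = 0 := by linear_combination -e4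
    rcases mul_eq_zero.mp hbb with h | h
    · exact h
    · exact absurd (pow_eq_zero_iff (by norm_num)|>.mp h) hu
  have ha : A 0 0 = 1 := by
    have haa : (A 0 0 - 1) * ((1 : LaurentPolynomial ℤ) - T 1) = 0 := by
      linear_combination e2 - (T 1 - T 1 ^ 2) * hc
    rcases mul_eq_zero.mp haa with h | h
    · linear_combination h
    · exact absurd h hu'
  have hd : A 1 1 = 1 := by
    have hdd : (A 0 0 - A 1 1) * ((T 1 : LaurentPolynomial ℤ) - 1) ^ 2 = 0 := by
      linear_combination e3
    rcases mul_eq_zero.mp hdd with h | h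
    · linear_combination -h + ha
    · exact absurd (pow_eq_zero_iff (by norm_num)|>.mp h) hu
  have hAone : A = 1 := by
    rw [Matrix.eta_fin_two A, ha, hb, hc, hd, Matrix.one_fin_two]
  -- the B-part
  have hps : B 0 0 ^ 2 + B 1 1 ^ 2 = 0 := by
    have h5 : ((1 : LaurentPolynomial ℤ) - T 1) * (B 0 0 ^ 2 + B 1 1 ^ 2) = 0 := by
      linear_combination e5
    rcases mul_eq_zero.mp h5 with h | h
    · exact absurd h hu'
    · exact h
  have hp : B 0 0 = 0 := by
    have h6 : B 0 0 ^ 2 * 2 = 0 := by linear_combination hps + e6 - e7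
    rcases mul_eq_zero.mp h6 with h | h
    · exact pow_eq_zero_iff (by norm_num) |>.mp h
    · exact absurd h two_ne_zero_laurent
  have hs : B 1 1 = 0 := by
    have h7 : B 1 1 ^ 2 = 0 := by linear_combination hps - (B 0 0) * hp
    exact pow_eq_zero_iff (by norm_num) |>.mp h7
  have hqr : B 0 1 * B 1 0 = 1 := by linear_combination e6 - (B 0 0) * hp
  have hrq : B 1 0 * B 0 1 = 1 := by linear_combination hqr
  refine ⟨hAone, ⟨B 0 1, B 1 0, hqr, hrq⟩, ?_⟩
  conv_lhs => rw [Matrix.eta_fin_two B]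
  rw [hp, hs]
  rfl
end

section
/- (Existence of the representation η'₁.) For every n ≥ 2 and every t, v ∈ ℂ with v ≠ 0, there exists a group homomorphism ρ : VST_n → GL_n(ℂ) such that for all 1 ≤ i ≤ n−1: ρ(s_i) = L_i(!![1−t, t; 2−t, t−1]), ρ(τ_i) = I_n (the n×n identity matrix), and ρ(ν_i) = L_i(!![0, v; v⁻¹, 0]). (In particular these matrices are invertible and satisfy all the defining relations of VST_n.) -/
/-- Generator type for the virtual singular twin group `VST_n`:
three copies of `Fin (n-1)`, for the generators `s_i`, `τ_i`, `ν_i`. -/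
abbrev VSTGen (n : ℕ) := Fin (n - 1) ⊕ Fin (n - 1) ⊕ Fin (n - 1)

def vstS (n : ℕ) (i : Fin (n - 1)) : FreeGroup (VSTGen n) := FreeGroup.of (Sum.inl i)
def vstT (n : ℕ) (i : Fin (n - 1)) : FreeGroup (VSTGen n) := FreeGroup.of (Sum.inr (Sum.inl i))
def vstN (n : ℕ) (i : Fin (n - 1)) : FreeGroup (VSTGen n) := FreeGroup.of (Sum.inr (Sum.inr i))

def vstAdj {n : ℕ} (i j : Fin (n - 1)) : Prop := i.val + 1 = j.val ∨ j.val + 1 = i.val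
def vstFar {n : ℕ} (i j : Fin (n - 1)) : Prop := i.val + 2 ≤ j.val ∨ j.val + 2 ≤ i.val

/-- The defining relations of the virtual singular twin group `VST_n`. -/
def vstRels (n : ℕ) : Set (FreeGroup (VSTGen n)) :=
  {r | (∃ i, r = vstS n i * vstS n i) ∨
       (∃ i, r = vstN n i * vstN n i) ∨
       (∃ i, r = vstT n i * vstS n i * (vstS n i * vstT n i)⁻¹) ∨
       (∃ i j, vstAdj i j ∧
          r = vstS n i * vstS n j * vstT n i * (vstT n j * vstS n i * vstS n j)⁻¹) ∨
       (∃ i j, vstAdj i j ∧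
          r = vstN n i * vstN n j * vstN n i * (vstN n j * vstN n i * vstN n j)⁻¹) ∨
       (∃ i j, vstAdj i j ∧
          r = vstN n i * vstS n j * vstN n i * (vstN n j * vstS n i * vstN n j)⁻¹) ∨
       (∃ i j, vstAdj i j ∧
          r = vstN n i * vstT n j * vstN n i * (vstN n j * vstT n i * vstN n j)⁻¹) ∨
       (∃ i j, vstFar i j ∧
          ∃ g ∈ ({vstS n, vstT n, vstN n} : Set (Fin (n - 1) → FreeGroup (VSTGen n))),
          ∃ h ∈ ({vstS n, vstT n, vstN n} : Set (Fin (n - 1) → FreeGroup (VSTGen n))),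
            r = g i * h j * (h j * g i)⁻¹)}

/-- The virtual singular twin group `VST_n`. -/
abbrev VST (n : ℕ) := PresentedGroup (vstRels n)

/-!
Send `s_i` and `ν_i` to their block matrices `L_i(S)` and `L_i(N)`, and `τ_i` to `1`. Both blocks
square to the identity, which gives the quadratic relations and, as `τ_i ↦ 1`, every relation
involving `τ`. Blocks on disjoint windows commute. The relations `ν_i g_j ν_i = ν_j g_i ν_j` hold
with any block `L(M)` in place of `g`: on the window `i, i+1, i+2` both sides fix `e_{i+1}` and act
on the span of `e_i, e_{i+2}` by `diag(v, 1) * M * diag(v⁻¹, 1)`.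
-/

section Lmat

variable {R : Type*} {n i : ℕ}

lemma Lmat_one [Zero R] [One R] : Lmat n i (1 : Matrix (Fin 2) (Fin 2) R) = 1 := by
  ext a b
  simp only [Lmat, Matrix.of_apply, Matrix.one_apply, Fin.ext_iff]
  split_ifs <;> simp_all <;> omega

lemma Lmat_apply_of_ne [Zero R] [One R] (M : Matrix (Fin 2) (Fin 2) R) {a b : Fin n}
    (hab : a ≠ b) (hout : ¬ ((a.val = i ∨ a.val = i + 1) ∧ (b.val = i ∨ b.val = i + 1))) :
    Lmat n i M a b = 0 := by
  rw [Fin.ne_iff_vne] at hab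
  simp only [Lmat, Matrix.of_apply]
  split_ifs <;> first | rfl | omega

lemma mul_Lmat_apply [NonAssocSemiring R] (hi : i + 1 < n) (M : Matrix (Fin 2) (Fin 2) R)
    (A : Matrix (Fin n) (Fin n) R) (a b : Fin n) :
    (A * Lmat n i M) a b =
      if b.val = i ∨ b.val = i + 1 then
        A a ⟨i, by omega⟩ * Lmat n i M ⟨i, by omega⟩ b + A a ⟨i + 1, hi⟩ * Lmat n i M ⟨i + 1, hi⟩ b
      else A a b := by
  rw [Matrix.mul_apply]
  split_ifs with hb
  · refine Fintype.sum_eq_add _ _ (by simp [Fin.ext_iff]) fun x hx => ?_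
    simp only [ne_eq, Fin.ext_iff] at hx
    rw [Lmat_apply_of_ne M (by rw [Fin.ne_iff_vne]; omega) (by omega), mul_zero]
  · rw [Fintype.sum_eq_single b fun x hx => by rw [Lmat_apply_of_ne M hx (by omega), mul_zero]]
    simp [Lmat, not_or.mp hb]

lemma Lmat_mul [Semiring R] (hi : i + 1 < n) (M M' : Matrix (Fin 2) (Fin 2) R) :
    Lmat n i M * Lmat n i M' = Lmat n i (M * M') := by
  ext a b
  rw [mul_Lmat_apply hi]
  rcases (by omega : b.val = i ∨ b.val = i + 1 ∨ (b.val ≠ i ∧ b.val ≠ i + 1)) with hb | hb | hb <;>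
  rcases (by omega : a.val = i ∨ a.val = i + 1 ∨ (a.val ≠ i ∧ a.val ≠ i + 1)) with ha | ha | ha <;>
  simp [Lmat, Matrix.mul_apply, Fin.sum_univ_two, *]

lemma Lmat_commute [Semiring R] {j : ℕ} (hj : j + 1 < n) (hij : i + 2 ≤ j)
    (M M' : Matrix (Fin 2) (Fin 2) R) : Commute (Lmat n i M) (Lmat n j M') := by
  have h₁ : i ≠ j := by omega
  have h₂ : i ≠ j + 1 := by omega
  have h₃ : i + 1 ≠ j := by omega
  ext a b
  rw [mul_Lmat_apply hj, mul_Lmat_apply (by omega)]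
  rcases (by omega : b.val = i ∨ b.val = i + 1 ∨ b.val = j ∨ b.val = j + 1 ∨
    (b.val ≠ i ∧ b.val ≠ i + 1 ∧ b.val ≠ j ∧ b.val ≠ j + 1)) with hb | hb | hb | hb | hb <;>
  rcases (by omega : a.val = i ∨ a.val = i + 1 ∨ a.val = j ∨ a.val = j + 1 ∨
    (a.val ≠ i ∧ a.val ≠ i + 1 ∧ a.val ≠ j ∧ a.val ≠ j + 1)) with ha | ha | ha | ha | ha <;>
  simp [Lmat, h₁.symm, h₂.symm, h₃.symm, *]

lemma Lmat_antidiag_conj [CommRing R] {v w : R} (hvw : v * w = 1) (hi : i + 2 < n)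
    (M : Matrix (Fin 2) (Fin 2) R) :
    Lmat n i !![0, v; w, 0] * Lmat n (i + 1) M * Lmat n i !![0, v; w, 0] =
      Lmat n (i + 1) !![0, v; w, 0] * Lmat n i M * Lmat n (i + 1) !![0, v; w, 0] := by
  have hne : i ≠ i + 1 + 1 := by omega
  ext a b
  simp only [mul_Lmat_apply hi, mul_Lmat_apply (show i + 1 < n by omega)]
  rcases (by omega : b.val = i ∨ b.val = i + 1 ∨ b.val = i + 2 ∨
    (b.val ≠ i ∧ b.val ≠ i + 1 ∧ b.val ≠ i + 2)) with hb | hb | hb | hb <;>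
  rcases (by omega : a.val = i ∨ a.val = i + 1 ∨ a.val = i + 2 ∨
    (a.val ≠ i ∧ a.val ≠ i + 1 ∧ a.val ≠ i + 2)) with ha | ha | ha | ha <;>
  simp [Lmat, hne.symm, *] <;> grind

lemma antidiag_mul_self [CommSemiring R] {v w : R} (hvw : v * w = 1) :
    !![0, v; w, 0] * !![0, v; w, 0] = 1 := by
  rw [Matrix.mul_fin_two, Matrix.one_fin_two, mul_comm w v, hvw]
  simp

lemma sBlock_mul_self [CommRing R] (t : R) :
    !![1 - t, t; 2 - t, t - 1] * !![1 - t, t; 2 - t, t - 1] = 1 := by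
  rw [Matrix.mul_fin_two, Matrix.one_fin_two]
  ext i j
  fin_cases i <;> fin_cases j <;> simp <;> ring

end Lmat

theorem VST.exists_hom_of_rels {n : ℕ} {G : Type*} [Group G] (S T N : Fin (n - 1) → G)
    (hS : ∀ i, S i * S i = 1) (hN : ∀ i, N i * N i = 1) (hTS : ∀ i, T i * S i = S i * T i)
    (hSST : ∀ i j, vstAdj i j → S i * S j * T i = T j * S i * S j)
    (hNNN : ∀ i j, vstAdj i j → N i * N j * N i = N j * N i * N j)
    (hNSN : ∀ i j, vstAdj i j → N i * S j * N i = N j * S i * N j)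
    (hNTN : ∀ i j, vstAdj i j → N i * T j * N i = N j * T i * N j)
    (hfar : ∀ i j, vstFar i j → ∀ g ∈ ({S, T, N} : Set (Fin (n - 1) → G)),
      ∀ h ∈ ({S, T, N} : Set (Fin (n - 1) → G)), Commute (g i) (h j)) :
    ∃ ρ : VST n →* G, ∀ i, ρ (PresentedGroup.of (Sum.inl i)) = S i ∧
      ρ (PresentedGroup.of (Sum.inr (Sum.inl i))) = T i ∧
      ρ (PresentedGroup.of (Sum.inr (Sum.inr i))) = N i := by
  have hrels : ∀ r ∈ vstRels n, FreeGroup.lift (Sum.elim S (Sum.elim T N)) r = 1 := by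
    rintro r (⟨i, rfl⟩ | ⟨i, rfl⟩ | ⟨i, rfl⟩ | ⟨i, j, hij, rfl⟩ | ⟨i, j, hij, rfl⟩ |
      ⟨i, j, hij, rfl⟩ | ⟨i, j, hij, rfl⟩ | ⟨i, j, hij, g, hg, h, hh, rfl⟩)
    all_goals simp only [map_mul, map_inv, mul_inv_eq_one]
    rotate_right
    · simp only [Set.mem_insert_iff, Set.mem_singleton_iff] at hg hh
      rcases hg with rfl | rfl | rfl <;> rcases hh with rfl | rfl | rfl <;>
        simp only [vstS, vstT, vstN, FreeGroup.lift_apply_of, Sum.elim_inl, Sum.elim_inr] <;>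
        exact (hfar i j hij _ (by simp) _ (by simp)).eq
    all_goals simp only [vstS, vstT, vstN, FreeGroup.lift_apply_of, Sum.elim_inl, Sum.elim_inr]
    · exact hS i
    · exact hN i
    · exact hTS i
    · exact hSST i j hij
    · exact hNNN i j hij
    · exact hNSN i j hij
    · exact hNTN i j hij
  exact ⟨PresentedGroup.toGroup hrels, fun i => by simp [PresentedGroup.toGroup.of]⟩

def unitOfMulSelfEqOne {α : Type*} [Monoid α] (a : α) (h : a * a = 1) : αˣ := ⟨a, a, h, h⟩

section VSTImages

variable {R : Type*} {n : ℕ}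

lemma Lmat_mul_self [Semiring R] {i : ℕ} (hi : i + 1 < n) {M : Matrix (Fin 2) (Fin 2) R}
    (hM : M * M = 1) : Lmat n i M * Lmat n i M = 1 := by
  rw [Lmat_mul hi, hM, Lmat_one]

lemma Lmat_commute_of_vstFar [Semiring R] {i j : Fin (n - 1)} (hij : vstFar i j)
    (M M' : Matrix (Fin 2) (Fin 2) R) : Commute (Lmat n i M) (Lmat n j M') := by
  rcases hij with hij | hij
  · exact Lmat_commute (by omega) hij M M'
  · exact (Lmat_commute (by omega) hij M' M).symm

lemma Lmat_antidiag_conj_of_vstAdj [CommRing R] {v w : R} (hvw : v * w = 1)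
    {i j : Fin (n - 1)} (hij : vstAdj i j) (M : Matrix (Fin 2) (Fin 2) R) :
    Lmat n i !![0, v; w, 0] * Lmat n j M * Lmat n i !![0, v; w, 0] =
      Lmat n j !![0, v; w, 0] * Lmat n i M * Lmat n j !![0, v; w, 0] := by
  rcases hij with hij | hij
  · rw [← hij]
    exact Lmat_antidiag_conj hvw (by omega) M
  · rw [← hij]
    exact (Lmat_antidiag_conj hvw (by omega) M).symm

end VSTImages

theorem exists_eta1_prime_representation_general (n : ℕ) (t v : ℂ) (hv : v ≠ 0) :
    ∃ ρ : VST n →* Matrix.GeneralLinearGroup (Fin n) ℂ,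
      ∀ i : Fin (n - 1),
        ((ρ (PresentedGroup.of (Sum.inl i)) : Matrix (Fin n) (Fin n) ℂ))
          = Lmat n i.val !![1 - t, t; 2 - t, t - 1] ∧
        ((ρ (PresentedGroup.of (Sum.inr (Sum.inl i))) : Matrix (Fin n) (Fin n) ℂ)) = 1 ∧
        ((ρ (PresentedGroup.of (Sum.inr (Sum.inr i))) : Matrix (Fin n) (Fin n) ℂ))
          = Lmat n i.val !![0, v; v⁻¹, 0] := by
  have hvw : v * v⁻¹ = 1 := mul_inv_cancel₀ hv
  have hi (i : Fin (n - 1)) : i.val + 1 < n := by omega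
  set S : Fin (n - 1) → Matrix.GeneralLinearGroup (Fin n) ℂ := fun i =>
    unitOfMulSelfEqOne _ (Lmat_mul_self (hi i) (sBlock_mul_self t))
  set N : Fin (n - 1) → Matrix.GeneralLinearGroup (Fin n) ℂ := fun i =>
    unitOfMulSelfEqOne _ (Lmat_mul_self (hi i) (antidiag_mul_self hvw))
  have hS (i) : S i * S i = 1 := Units.ext (Lmat_mul_self (hi i) (sBlock_mul_self t))
  have hN (i) : N i * N i = 1 := Units.ext (Lmat_mul_self (hi i) (antidiag_mul_self hvw))
  have hblock : ∀ g ∈ ({S, 1, N} : Set (Fin (n - 1) → Matrix.GeneralLinearGroup (Fin n) ℂ)),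
      ∃ M, ∀ k, (g k : Matrix (Fin n) (Fin n) ℂ) = Lmat n k M := by
    rintro g (rfl | rfl | rfl)
    exacts [⟨_, fun _ => rfl⟩, ⟨1, fun _ => Lmat_one.symm⟩, ⟨_, fun _ => rfl⟩]
  obtain ⟨ρ, hρ⟩ := VST.exists_hom_of_rels S 1 N hS hN (by simp) (by simp)
    (fun i j hij => Units.ext (Lmat_antidiag_conj_of_vstAdj hvw hij _))
    (fun i j hij => Units.ext (Lmat_antidiag_conj_of_vstAdj hvw hij _))
    (fun i j _ => by simp [hN])
    (fun i j hij g hg h hh => by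
      obtain ⟨M, hM⟩ := hblock g hg
      obtain ⟨M', hM'⟩ := hblock h hh
      rw [← Commute.units_val_iff, hM, hM']
      exact Lmat_commute_of_vstFar hij M M')
  exact ⟨ρ, fun i => by simp [hρ i, S, N, unitOfMulSelfEqOne]⟩

/-- Existence of the representation `η'₁` of `VST_n`:
`s_i ↦ L_i(!![1-t, t; 2-t, t-1])`, `τ_i ↦ I_n`, `ν_i ↦ L_i(!![0, v; v⁻¹, 0])`. -/
theorem exists_eta1_prime_representation (n : ℕ) (hn : 2 ≤ n) (t v : ℂ) (hv : v ≠ 0) :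
    ∃ ρ : VST n →* Matrix.GeneralLinearGroup (Fin n) ℂ,
      ∀ i : Fin (n - 1),
        ((ρ (PresentedGroup.of (Sum.inl i)) : Matrix (Fin n) (Fin n) ℂ))
          = Lmat n i.val !![1 - t, t; 2 - t, t - 1] ∧
        ((ρ (PresentedGroup.of (Sum.inr (Sum.inl i))) : Matrix (Fin n) (Fin n) ℂ)) = 1 ∧
        ((ρ (PresentedGroup.of (Sum.inr (Sum.inr i))) : Matrix (Fin n) (Fin n) ℂ))
          = Lmat n i.val !![0, v; v⁻¹, 0] :=
  exists_eta1_prime_representation_general n t v hv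
end

section
/- (Theorem 4.2, necessity: η'₁ is reducible when v = 1.) Let n ≥ 3 and t ∈ ℂ, and set v = 1. Then every matrix in the family 𝒮 = { L_i(!![1−t, t; 2−t, t−1]), I_n, L_i(!![0, v; v⁻¹, 0]) : 1 ≤ i ≤ n−1 } fixes the all-ones vector 𝟙 = (1, 1, …, 1) ∈ ℂⁿ, i.e. M.mulVec 𝟙 = 𝟙 for every M ∈ 𝒮. Consequently the line U = ℂ∙𝟙 (the Submodule span of 𝟙) is a submodule of ℂⁿ with ⊥ ≠ U ≠ ⊤ that is invariant under 𝒮, so the representation η'₁ of VST_n is reducible. -/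
lemma Lmat_mulVec_one {n i : ℕ} (hi : i + 1 < n) (M : Matrix (Fin 2) (Fin 2) ℂ)
    (h0 : M 0 0 + M 0 1 = 1) (h1 : M 1 0 + M 1 1 = 1) :
    (Lmat n i M).mulVec (fun _ => (1:ℂ)) = fun _ => 1 := by
  have hi0 : i < n := Nat.lt_of_succ_lt hi
  funext a
  simp only [Matrix.mulVec, dotProduct, mul_one, Lmat, Matrix.of_apply]
  set i0 : Fin n := ⟨i, hi0⟩ with hi0def
  set i1 : Fin n := ⟨i+1, hi⟩ with hi1def
  by_cases ha : a.val = i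
  · have key : ∀ b : Fin n, (if a.val = i ∧ b.val = i then M 0 0
      else if a.val = i ∧ b.val = i + 1 then M 0 1
      else if a.val = i + 1 ∧ b.val = i then M 1 0
      else if a.val = i + 1 ∧ b.val = i + 1 then M 1 1
      else if a.val = b.val then (1:ℂ) else 0)
      = (if b = i0 then M 0 0 else 0) + (if b = i1 then M 0 1 else 0) := by
      intro b
      by_cases hb : b = i0
      · subst hb; simp [ha, Fin.ext_iff, hi0def, hi1def]
      · by_cases hb' : b = i1
        · subst hb'; simp [ha, Fin.ext_iff, hi0def, hi1def]
        · have hb1 : ¬ b.val = i := by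
            intro h; exact hb (Fin.ext (by simpa [hi0def] using h))
          have hb2 : ¬ b.val = i + 1 := by
            intro h; exact hb' (Fin.ext (by simpa [hi1def] using h))
          have hab : ¬ a.val = b.val := by omega
          simp [hb, hb', hb1, hb2, hab]
    simp_rw [key]
    rw [Finset.sum_add_distrib, Finset.sum_ite_eq', Finset.sum_ite_eq']
    simpa using h0
  · by_cases ha' : a.val = i + 1
    · have key : ∀ b : Fin n, (if a.val = i ∧ b.val = i then M 0 0
        else if a.val = i ∧ b.val = i + 1 then M 0 1
        else if a.val = i + 1 ∧ b.val = i then M 1 0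
        else if a.val = i + 1 ∧ b.val = i + 1 then M 1 1
        else if a.val = b.val then (1:ℂ) else 0)
        = (if b = i0 then M 1 0 else 0) + (if b = i1 then M 1 1 else 0) := by
        intro b
        by_cases hb : b = i0
        · subst hb; simp [ha, ha', Fin.ext_iff, hi0def, hi1def]
        · by_cases hb' : b = i1
          · subst hb'; simp [ha, ha', Fin.ext_iff, hi0def, hi1def]
          · have hb1 : ¬ b.val = i := by
              intro h; exact hb (Fin.ext (by simpa [hi0def] using h))
            have hb2 : ¬ b.val = i + 1 := by
              intro h; exact hb' (Fin.ext (by simpa [hi1def] using h))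
            have hab : ¬ a.val = b.val := by omega
            simp [ha, hb, hb', hb1, hb2, hab]
      simp_rw [key]
      rw [Finset.sum_add_distrib, Finset.sum_ite_eq', Finset.sum_ite_eq']
      simpa using h1
    · have key : ∀ b : Fin n, (if a.val = i ∧ b.val = i then M 0 0
        else if a.val = i ∧ b.val = i + 1 then M 0 1
        else if a.val = i + 1 ∧ b.val = i then M 1 0
        else if a.val = i + 1 ∧ b.val = i + 1 then M 1 1
        else if a.val = b.val then (1:ℂ) else 0)
        = (if b = a then (1:ℂ) else 0) := by
        intro b
        by_cases hb : b = a
        · subst hb; simp [ha, ha']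
        · have hab : ¬ a.val = b.val := fun h => hb (Fin.ext h.symm)
          simp [ha, ha', hab, hb]
      simp_rw [key]
      rw [Finset.sum_ite_eq']
      simp
/-- (Theorem 4.2, necessity.) For `v = 1`, every matrix in the image of the
representation family `η'₁` fixes the all-ones vector, so the line spanned by it is a
nontrivial proper invariant submodule: `η'₁` is reducible. -/
theorem eta1_prime_reducible_of_v_eq_one (n : ℕ) (hn : 3 ≤ n) (t v : ℂ) (hv : v = 1) :
    (∀ M ∈ ({M | (∃ i : Fin (n - 1), M = Lmat n i.val !![1 - t, t; 2 - t, t - 1]) ∨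
                 M = 1 ∨
                 (∃ i : Fin (n - 1), M = Lmat n i.val !![0, v; v⁻¹, 0])} :
        Set (Matrix (Fin n) (Fin n) ℂ)),
      M.mulVec (fun _ => (1 : ℂ)) = fun _ => (1 : ℂ)) ∧
    Submodule.span ℂ {(fun _ => (1 : ℂ) : Fin n → ℂ)} ≠ ⊥ ∧
    Submodule.span ℂ {(fun _ => (1 : ℂ) : Fin n → ℂ)} ≠ ⊤ ∧
    (∀ M ∈ ({M | (∃ i : Fin (n - 1), M = Lmat n i.val !![1 - t, t; 2 - t, t - 1]) ∨
                 M = 1 ∨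
                 (∃ i : Fin (n - 1), M = Lmat n i.val !![0, v; v⁻¹, 0])} :
        Set (Matrix (Fin n) (Fin n) ℂ)),
      ∀ x ∈ Submodule.span ℂ {(fun _ => (1 : ℂ) : Fin n → ℂ)},
        M.mulVec x ∈ Submodule.span ℂ {(fun _ => (1 : ℂ) : Fin n → ℂ)}) := by
  subst hv
  have hfix : ∀ M ∈ ({M | (∃ i : Fin (n - 1), M = Lmat n i.val !![1 - t, t; 2 - t, t - 1]) ∨
                 M = 1 ∨
                 (∃ i : Fin (n - 1), M = Lmat n i.val !![0, (1:ℂ); (1:ℂ)⁻¹, 0])} :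
        Set (Matrix (Fin n) (Fin n) ℂ)),
      M.mulVec (fun _ => (1 : ℂ)) = fun _ => (1 : ℂ) := by
    rintro M (⟨i, rfl⟩ | rfl | ⟨i, rfl⟩)
    · have hi : i.val + 1 < n := by omega
      exact Lmat_mulVec_one hi _ (by norm_num [Matrix.cons_val_zero, Matrix.cons_val_one])
        (by norm_num [Matrix.cons_val_zero, Matrix.cons_val_one]) 
    · exact Matrix.one_mulVec _
    · have hi : i.val + 1 < n := by omega
      exact Lmat_mulVec_one hi _ (by norm_num) (by norm_num)
  refine ⟨hfix, ?_, ?_, ?_⟩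
  · rw [Ne, Submodule.span_singleton_eq_bot]
    intro h
    have := congrFun h ⟨0, by omega⟩
    simp at this
  · intro h
    have hmem : (Pi.single (⟨0, by omega⟩ : Fin n) (1:ℂ)) ∈
        Submodule.span ℂ {(fun _ => (1 : ℂ) : Fin n → ℂ)} := h ▸ Submodule.mem_top
    rw [Submodule.mem_span_singleton] at hmem
    obtain ⟨c, hc⟩ := hmem
    have h0 := congrFun hc ⟨0, by omega⟩
    have h1 := congrFun hc ⟨1, by omega⟩
    have hne : (⟨1, by omega⟩ : Fin n) ≠ ⟨0, by omega⟩ := by simp [Fin.ext_iff]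
    simp [Pi.single_apply, hne] at h0 h1
    simp [h1] at h0
  · intro M hM x hx
    rw [Submodule.mem_span_singleton] at hx ⊢
    obtain ⟨c, rfl⟩ := hx
    exact ⟨c, by rw [Matrix.mulVec_smul, hfix M hM]⟩
end

section
/- (Theorem 4.2, sufficiency: irreducibility of η'₁ over ℂ.) Let n ≥ 3 and t, v ∈ ℂ with v ≠ 0, v ≠ 1, and (2−t)·v ≠ t. Let 𝒮 = { L_i(!![1−t, t; 2−t, t−1]), L_i(!![0, v; v⁻¹, 0]) : 1 ≤ i ≤ n−1 } ∪ {I_n}. Then every submodule U of ℂⁿ that is invariant under 𝒮 (i.e. M.mulVec x ∈ U for all M ∈ 𝒮 and x ∈ U) satisfies U = ⊥ or U = ⊤. That is, the representation η'₁ of VST_n with these parameters is irreducible. -/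
open Matrix

section Ring
variable {R : Type*} [Ring R] {m : ℕ}

def adjacentSingle (j : Fin m) : (Fin 2 → R) →ₗ[R] Fin (m + 1) → R :=
  LinearMap.single R (fun _ ↦ R) j.castSucc ∘ₗ LinearMap.proj 0 +
    LinearMap.single R (fun _ ↦ R) j.succ ∘ₗ LinearMap.proj 1

theorem adjacentSingle_apply (j : Fin m) (w : Fin 2 → R) :
    adjacentSingle j w = Pi.single j.castSucc (w 0) + Pi.single j.succ (w 1) := rfl

theorem adjacentSingle_injective (j : Fin m) :
    Function.Injective (adjacentSingle (R := R) j) := by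
  have hne : j.castSucc ≠ j.succ := Fin.castSucc_lt_succ.ne
  refine (injective_iff_map_eq_zero _).2 fun w hw ↦ ?_
  have h0 := congrFun hw j.castSucc
  have h1 := congrFun hw j.succ
  simp only [adjacentSingle_apply, Pi.add_apply, Pi.single_eq_same, Pi.single_eq_of_ne hne,
    Pi.single_eq_of_ne hne.symm, add_zero, zero_add, Pi.zero_apply] at h0 h1
  ext i
  fin_cases i <;> assumption

theorem Lmat_apply_of_ne_s4 {j : Fin m} (M : Matrix (Fin 2) (Fin 2) R) {a b : Fin (m + 1)}
    (h : (a ≠ j.castSucc ∧ a ≠ j.succ) ∨ (b ≠ j.castSucc ∧ b ≠ j.succ)) :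
    Lmat (m + 1) j M a b = (1 : Matrix (Fin (m + 1)) (Fin (m + 1)) R) a b := by
  simp only [ne_eq, Fin.ext_iff, Fin.val_castSucc, Fin.val_succ] at h
  rcases h with ⟨h, h'⟩ | ⟨h, h'⟩ <;> simp [Lmat, one_apply, Fin.ext_iff, h, h']

theorem Lmat_mulVec_sub_self (j : Fin m) (M : Matrix (Fin 2) (Fin 2) R) (x : Fin (m + 1) → R) :
    Lmat (m + 1) j M *ᵥ x - x = adjacentSingle j ((M - 1) *ᵥ ![x j.castSucc, x j.succ]) := by
  ext a
  have hne : j.castSucc ≠ j.succ := Fin.castSucc_lt_succ.ne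
  rw [Pi.sub_apply, mulVec, dotProduct, adjacentSingle_apply]
  by_cases hblock : a = j.castSucc ∨ a = j.succ
  · have hrow (b) (hb : b ≠ j.castSucc ∧ b ≠ j.succ) : Lmat (m + 1) j M a b * x b = 0 := by
      rw [Lmat_apply_of_ne_s4 M (Or.inr hb), one_apply_ne (by rintro rfl; tauto), zero_mul]
    rw [Fintype.sum_eq_add _ _ hne hrow]
    rcases hblock with rfl | rfl
    · simp [Lmat, mulVec, dotProduct, Fin.sum_univ_two, hne, sub_mul]
    · simp [Lmat, mulVec, dotProduct, Fin.sum_univ_two, hne.symm, sub_mul]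
  · rw [not_or] at hblock
    simp [Lmat_apply_of_ne_s4 M (Or.inl hblock), one_apply, hblock.1, hblock.2]

def IsLmatInvariant (M : Matrix (Fin 2) (Fin 2) R) (U : Submodule R (Fin (m + 1) → R)) : Prop :=
  ∀ j : Fin m, ∀ x ∈ U, Lmat (m + 1) j M *ᵥ x ∈ U

theorem IsLmatInvariant.adjacentSingle_mem {M : Matrix (Fin 2) (Fin 2) R}
    {U : Submodule R (Fin (m + 1) → R)} (hM : IsLmatInvariant M U) {x : Fin (m + 1) → R}
    (hx : x ∈ U) (j : Fin m) : adjacentSingle j ((M - 1) *ᵥ ![x j.castSucc, x j.succ]) ∈ U :=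
  Lmat_mulVec_sub_self j M x ▸ U.sub_mem (hM j x hx) hx

end Ring

theorem iff_zero_of_forall_castSucc_iff_succ {m : ℕ} {P : Fin (m + 1) → Prop}
    (h : ∀ j : Fin m, P j.castSucc ↔ P j.succ) (k : Fin (m + 1)) : P k ↔ P 0 :=
  Fin.induction Iff.rfl (fun j ih ↦ (h j).symm.trans ih) k

section Field
variable {K : Type*} [Field K]

theorem Submodule.eq_top_of_mem_of_cross_ne_zero {W : Submodule K (Fin 2 → K)} {p q : Fin 2 → K}
    (hp : p ∈ W) (hq : q ∈ W) (hpq : p 0 * q 1 - p 1 * q 0 ≠ 0) : W = ⊤ := by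
  refine W.eq_top_iff'.2 fun w ↦ ?_
  have hcramer : (p 0 * q 1 - p 1 * q 0) • w =
      (w 0 * q 1 - w 1 * q 0) • p + (p 0 * w 1 - p 1 * w 0) • q := by
    refine funext (Fin.forall_fin_two.2 ⟨?_, ?_⟩) <;>
      · simp only [Pi.add_apply, Pi.smul_apply, smul_eq_mul]; ring
  rw [← inv_smul_smul₀ hpq w, hcramer]
  exact W.smul_mem _ (W.add_mem (W.smul_mem _ hp) (W.smul_mem _ hq))

def sBlock (t : K) : Matrix (Fin 2) (Fin 2) K := !![1 - t, t; 2 - t, t - 1]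

def nuBlock (v : K) : Matrix (Fin 2) (Fin 2) K := !![0, v; v⁻¹, 0]

theorem sBlock_sub_one_mulVec (t : K) (w : Fin 2 → K) :
    (sBlock t - 1) *ᵥ w = (w 0 - w 1) • ![-t, 2 - t] := by
  ext i
  fin_cases i <;> simp [sBlock, mulVec, dotProduct, Fin.sum_univ_two, one_apply] <;> ring

theorem nuBlock_sub_one_mulVec {v : K} (hv : v ≠ 0) (w : Fin 2 → K) :
    (nuBlock v - 1) *ᵥ w = (v⁻¹ * w 0 - w 1) • ![-v, 1] := by
  ext i
  fin_cases i <;> simp [nuBlock, mulVec, dotProduct, Fin.sum_univ_two, one_apply] <;>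
    field_simp <;> ring

end Field

section Irreducible
variable {K : Type*} [Field K] {m : ℕ} {t v : K} {U : Submodule K (Fin (m + 1) → K)}

theorem adjacentSingle_mem_of_separated (hS : IsLmatInvariant (sBlock t) U)
    (hN : IsLmatInvariant (nuBlock v) U) (hv : v ≠ 0) (hvt : (2 - t) * v ≠ t)
    {x : Fin (m + 1) → K} (hx : x ∈ U) {j : Fin m} (h1 : x j.castSucc ≠ x j.succ)
    (h2 : v⁻¹ * x j.castSucc ≠ x j.succ) (w : Fin 2 → K) : adjacentSingle j w ∈ U := by
  suffices U.comap (adjacentSingle j) = ⊤ from Submodule.mem_comap.1 (this ▸ Submodule.mem_top)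
  refine Submodule.eq_top_of_mem_of_cross_ne_zero (hS.adjacentSingle_mem hx j)
    (hN.adjacentSingle_mem hx j) ?_
  rw [sBlock_sub_one_mulVec, nuBlock_sub_one_mulVec hv]
  simp only [Pi.smul_apply, smul_eq_mul, cons_val_zero, cons_val_one]
  convert mul_ne_zero (mul_ne_zero (sub_ne_zero.2 h1) (sub_ne_zero.2 h2)) (sub_ne_zero.2 hvt)
    using 1
  ring

theorem single_castSucc_mem_iff_single_succ_mem (hS : IsLmatInvariant (sBlock t) U)
    (hN : IsLmatInvariant (nuBlock v) U) (hv : v ≠ 0) (hvt : (2 - t) * v ≠ t) (j : Fin m) :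
    Pi.single j.castSucc (1 : K) ∈ U ↔ Pi.single j.succ (1 : K) ∈ U := by
  have hne : j.castSucc ≠ j.succ := Fin.castSucc_lt_succ.ne
  constructor <;> intro h
  · simpa [adjacentSingle_apply] using adjacentSingle_mem_of_separated hS hN hv hvt h
      (by simp [hne]) (by simp [hne, hv]) ![0, 1]
  · simpa [adjacentSingle_apply] using adjacentSingle_mem_of_separated hS hN hv hvt h
      (by simp [hne]) (by simp [hne.symm]) ![1, 0]

theorem eq_top_of_single_mem (hS : IsLmatInvariant (sBlock t) U)
    (hN : IsLmatInvariant (nuBlock v) U) (hv : v ≠ 0) (hvt : (2 - t) * v ≠ t)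
    {k : Fin (m + 1)} (hk : Pi.single k (1 : K) ∈ U) : U = ⊤ := by
  have hiff := iff_zero_of_forall_castSucc_iff_succ (P := fun i ↦ Pi.single i (1 : K) ∈ U)
    (single_castSucc_mem_iff_single_succ_mem hS hN hv hvt)
  rw [eq_top_iff, ← (Pi.basisFun K (Fin (m + 1))).span_eq, Submodule.span_le]
  rintro _ ⟨i, rfl⟩
  simpa using (hiff i).2 ((hiff k).1 hk)

theorem eq_top_of_ne_zero_of_apply_eq_zero (hS : IsLmatInvariant (sBlock t) U)
    (hN : IsLmatInvariant (nuBlock v) U) (hv : v ≠ 0) (hvt : (2 - t) * v ≠ t)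
    {y : Fin (m + 1) → K} (hy : y ∈ U) (hy0 : y ≠ 0) {k : Fin (m + 1)} (hk : y k = 0) :
    U = ⊤ := by
  obtain ⟨j, hj⟩ : ∃ j : Fin m, ¬(y j.castSucc = 0 ↔ y j.succ = 0) := by
    by_contra! h
    have hiff := iff_zero_of_forall_castSucc_iff_succ (P := fun i ↦ y i = 0) h
    exact hy0 (funext fun i ↦ (hiff i).2 ((hiff k).1 hk))
  refine eq_top_of_single_mem hS hN hv hvt (k := j.castSucc) ?_
  have hsep1 : y j.castSucc ≠ y j.succ := fun h ↦ hj (by rw [h])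
  have hsep2 : v⁻¹ * y j.castSucc ≠ y j.succ := fun h ↦ hj (by simp [← h, hv])
  simpa [adjacentSingle_apply] using
    adjacentSingle_mem_of_separated hS hN hv hvt hy hsep1 hsep2 ![1, 0]

theorem exists_ne_zero_apply_eq_zero (hS : IsLmatInvariant (sBlock t) U)
    (hN : IsLmatInvariant (nuBlock v) U) (hv0 : v ≠ 0) (hv1 : v ≠ 1) (hvt : (2 - t) * v ≠ t)
    (hm : 2 ≤ m) (hU : U ≠ ⊥) : ∃ y ∈ U, y ≠ 0 ∧ ∃ k, y k = 0 := by
  obtain ⟨x, hx, hx0⟩ := U.ne_bot_iff.1 hU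
  by_cases hz : ∃ k, x k = 0
  · exact ⟨x, hx, hx0, hz⟩
  let j : Fin m := ⟨0, by omega⟩
  have hzero (w : Fin 2 → K) : adjacentSingle j w ⟨2, by omega⟩ = 0 := by
    simp [adjacentSingle_apply, Fin.ext_iff, j]
  have hne (w : Fin 2 → K) (hw : w ≠ 0) : adjacentSingle j w ≠ 0 :=
    (map_ne_zero_iff _ (adjacentSingle_injective j)).2 hw
  by_cases hx1 : x j.castSucc = x j.succ
  · refine ⟨_, hN.adjacentSingle_mem hx j, hne _ ?_, _, hzero _⟩
    have hx0 : x j.castSucc ≠ 0 := fun h ↦ hz ⟨_, h⟩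
    rw [nuBlock_sub_one_mulVec hv0, ← hx1]
    simp only [cons_val_zero, cons_val_one]
    rw [← sub_one_mul]
    refine smul_ne_zero (mul_ne_zero ?_ hx0) fun h ↦ by simpa using congrFun h 1
    rwa [sub_ne_zero, inv_ne_one]
  · refine ⟨_, hS.adjacentSingle_mem hx j, hne _ ?_, _, hzero _⟩
    rw [sBlock_sub_one_mulVec]
    refine smul_ne_zero (sub_ne_zero.2 hx1) fun h ↦ hvt ?_
    have ht : t = 0 := by simpa using congrFun h 0
    have h2t : 2 - t = 0 := by simpa using congrFun h 1
    rw [h2t, ht, zero_mul]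

end Irreducible

/-- (Theorem 4.2, sufficiency, over `ℂ`.) If `v ≠ 0`, `v ≠ 1` and `(2 - t)·v ≠ t`, then
the only submodules of `ℂⁿ` invariant under all the matrices of the representation
`η'₁` are `⊥` and `⊤`: the representation `η'₁` is irreducible. -/
theorem eta1_prime_irreducible (n : ℕ) (hn : 3 ≤ n) (t v : ℂ)
    (hv0 : v ≠ 0) (hv1 : v ≠ 1) (hvt : (2 - t) * v ≠ t)
    (U : Submodule ℂ (Fin n → ℂ))
    (hU : ∀ M ∈ ({M | (∃ i : Fin (n - 1), M = Lmat n i.val !![1 - t, t; 2 - t, t - 1]) ∨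
                      (∃ i : Fin (n - 1), M = Lmat n i.val !![0, v; v⁻¹, 0]) ∨
                      M = 1} :
        Set (Matrix (Fin n) (Fin n) ℂ)),
      ∀ x ∈ U, M.mulVec x ∈ U) :
    U = ⊥ ∨ U = ⊤ := by
  obtain ⟨m, rfl⟩ : ∃ m, n = m + 1 := ⟨n - 1, by omega⟩
  -- `Fin (m + 1 - 1)` is definitionally `Fin m`, so `j : Fin m` indexes the generators directly.
  have hS : IsLmatInvariant (sBlock t) U := fun j ↦ hU _ (Or.inl ⟨j, rfl⟩)
  have hN : IsLmatInvariant (nuBlock v) U := fun j ↦ hU _ (Or.inr (Or.inl ⟨j, rfl⟩))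
  refine or_iff_not_imp_left.2 fun hbot ↦ ?_
  obtain ⟨y, hy, hy0, k, hk⟩ := exists_ne_zero_apply_eq_zero hS hN hv0 hv1 hvt (by omega) hbot
  exact eq_top_of_ne_zero_of_apply_eq_zero hS hN hv0 hvt hy hy0 hk
end

section
/- (Theorem 4.4, classification of homogeneous 2-local extensions of η₂.) Let R = ℤ[t^{±1}] be the ring of Laurent polynomials over ℤ (Mathlib: LaurentPolynomial ℤ), let n ≥ 3, let f be a unit of R, and let Ŝ = !![0, f; f⁻¹, 0]. Suppose A and B are invertible 2×2 matrices over R such that the n×n matrices S_i := L_i(Ŝ), T_i := L_i(A), V_i := L_i(B) for 1 ≤ i ≤ n−1 satisfy all the defining relations of VST_n, namely: S_i² = 1 and V_i² = 1 for all i; T_i S_i = S_i T_i for all i; S_i S_j T_i = T_j S_i S_j, V_i V_j V_i = V_j V_i V_j, V_i S_j V_i = V_j S_i V_j, and V_i T_j V_i = V_j T_i V_j for |i−j| = 1; and any two of the matrices S_i, T_i, V_i, S_j, T_j, V_j commute when |i−j| ≥ 2. Then there exist w, y ∈ R and a unit v of R such that A = !![w, f²·y; y, w] and B = !![0, v; v⁻¹,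 0]. -/
namespace Eta2Aux

variable {R : Type*} [CommRing R]

def e3 (n : ℕ) (h : 3 ≤ n) : Fin 3 ⊕ Fin (n - 3) ≃ Fin n :=
  finSumFinEquiv.trans (finCongr (by omega))

def emb (n : ℕ) (h : 3 ≤ n) (X : Matrix (Fin 3) (Fin 3) R) : Matrix (Fin n) (Fin n) R :=
  (Matrix.reindexAlgEquiv R _ (e3 n h)) (Matrix.fromBlocks X 0 0 1)

lemma emb_mul (n : ℕ) (h : 3 ≤ n) (X Y : Matrix (Fin 3) (Fin 3) R) :
    emb n h X * emb n h Y = emb n h (X * Y) := by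
  unfold emb
  rw [← map_mul, Matrix.fromBlocks_multiply]
  simp

lemma emb_one (n : ℕ) (h : 3 ≤ n) : emb n h (1 : Matrix (Fin 3) (Fin 3) R) = 1 := by
  unfold emb
  rw [Matrix.fromBlocks_one, map_one]

lemma emb_inj {n : ℕ} {h : 3 ≤ n} {X Y : Matrix (Fin 3) (Fin 3) R}
    (hXY : emb n h X = emb n h Y) : X = Y := by
  unfold emb at hXY
  have h2 := (Matrix.reindexAlgEquiv R _ (e3 n h)).injective hXY
  have h3 := congrArg Matrix.toBlocks₁₁ h2
  simpa [Matrix.toBlocks_fromBlocks₁₁] using h3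

lemma e3_symm_lt {n : ℕ} (h : 3 ≤ n) (a : Fin n) (h3 : a.val < 3) :
    (e3 n h).symm a = Sum.inl ⟨a.val, h3⟩ := by
  rw [Equiv.symm_apply_eq]
  apply Fin.ext
  simp [e3, finSumFinEquiv_apply_left]

lemma e3_symm_ge {n : ℕ} (h : 3 ≤ n) (a : Fin n) (h3 : ¬ a.val < 3) :
    (e3 n h).symm a = Sum.inr ⟨a.val - 3, by omega⟩ := by
  rw [Equiv.symm_apply_eq]
  apply Fin.ext
  simp [e3, finSumFinEquiv_apply_right]
  omega

lemma emb_apply {n : ℕ} (h : 3 ≤ n) (X : Matrix (Fin 3) (Fin 3) R) (a b : Fin n) :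
    emb n h X a b =
      if ha : a.val < 3 then
        (if hb : b.val < 3 then X ⟨a.val, ha⟩ ⟨b.val, hb⟩ else 0)
      else (if a.val = b.val then 1 else 0) := by
  unfold emb
  rw [Matrix.reindexAlgEquiv_apply, Matrix.reindex_apply, Matrix.submatrix_apply]
  by_cases ha : a.val < 3
  · rw [e3_symm_lt h a ha, dif_pos ha]
    by_cases hb : b.val < 3
    · rw [e3_symm_lt h b hb, dif_pos hb, Matrix.fromBlocks_apply₁₁]
    · rw [e3_symm_ge h b hb, dif_neg hb, Matrix.fromBlocks_apply₁₂, Matrix.zero_apply]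
  · rw [e3_symm_ge h a ha, dif_neg ha]
    by_cases hb : b.val < 3
    · rw [e3_symm_lt h b hb, Matrix.fromBlocks_apply₂₁, Matrix.zero_apply,
        if_neg (by omega : ¬ a.val = b.val)]
    · rw [e3_symm_ge h b hb, Matrix.fromBlocks_apply₂₂, Matrix.one_apply]
      by_cases hab : a.val = b.val
      · rw [if_pos hab, if_pos (by simp [Fin.ext_iff]; omega)]
      · rw [if_neg hab, if_neg (by simp [Fin.ext_iff]; omega)]

lemma Lmat_emb (n : ℕ) (h : 3 ≤ n) (i : ℕ) (hi : i + 1 < 3) (M : Matrix (Fin 2) (Fin 2) R) :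
    Lmat n i M = emb n h (Lmat 3 i M) := by
  ext a b
  rw [emb_apply]
  by_cases ha : a.val < 3
  · rw [dif_pos ha]
    by_cases hb : b.val < 3
    · rw [dif_pos hb]; rfl
    · rw [dif_neg hb]
      show (if a.val = i ∧ b.val = i then M 0 0 else _) = 0
      split_ifs <;> first | rfl | omega
  · rw [dif_neg ha]
    show (if a.val = i ∧ b.val = i then M 0 0 else _) = _
    split_ifs <;> first | rfl | omega

end Eta2Aux

/-- (Theorem 4.4.) Classification of the homogeneous 2-local representations of `VST_n`
extending the representation `η₂` of the twin group: the `τ`-block must be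
`!![w, f²y; y, w]` and the `ν`-block must be `!![0, v; v⁻¹, 0]` for a unit `v`. -/
theorem classification_eta2_extension (n : ℕ) (hn : 3 ≤ n)
    (f : (LaurentPolynomial ℤ)ˣ)
    (A B : Matrix (Fin 2) (Fin 2) (LaurentPolynomial ℤ))
    (hA : IsUnit A) (hB : IsUnit B)
    (Shat : Matrix (Fin 2) (Fin 2) (LaurentPolynomial ℤ))
    (hShat : Shat = !![0, (f : LaurentPolynomial ℤ);
      ((f⁻¹ : (LaurentPolynomial ℤ)ˣ) : LaurentPolynomial ℤ), 0])
    (hS2 : ∀ i : Fin (n - 1), Lmat n i.val Shat * Lmat n i.val Shat = 1)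
    (hV2 : ∀ i : Fin (n - 1), Lmat n i.val B * Lmat n i.val B = 1)
    (hTS : ∀ i : Fin (n - 1), Lmat n i.val A * Lmat n i.val Shat
      = Lmat n i.val Shat * Lmat n i.val A)
    (hSST : ∀ i j : Fin (n - 1), (i.val + 1 = j.val ∨ j.val + 1 = i.val) →
      Lmat n i.val Shat * Lmat n j.val Shat * Lmat n i.val A
        = Lmat n j.val A * Lmat n i.val Shat * Lmat n j.val Shat)
    (hVVV : ∀ i j : Fin (n - 1), (i.val + 1 = j.val ∨ j.val + 1 = i.val) →
      Lmat n i.val B * Lmat n j.val B * Lmat n i.val B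
        = Lmat n j.val B * Lmat n i.val B * Lmat n j.val B)
    (hVSV : ∀ i j : Fin (n - 1), (i.val + 1 = j.val ∨ j.val + 1 = i.val) →
      Lmat n i.val B * Lmat n j.val Shat * Lmat n i.val B
        = Lmat n j.val B * Lmat n i.val Shat * Lmat n j.val B)
    (hVTV : ∀ i j : Fin (n - 1), (i.val + 1 = j.val ∨ j.val + 1 = i.val) →
      Lmat n i.val B * Lmat n j.val A * Lmat n i.val B
        = Lmat n j.val B * Lmat n i.val A * Lmat n j.val B)
    (hcomm : ∀ i j : Fin (n - 1), (i.val + 2 ≤ j.val ∨ j.val + 2 ≤ i.val) →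
      ∀ X ∈ ({Lmat n i.val Shat, Lmat n i.val A, Lmat n i.val B} :
        Set (Matrix (Fin n) (Fin n) (LaurentPolynomial ℤ))),
      ∀ Y ∈ ({Lmat n j.val Shat, Lmat n j.val A, Lmat n j.val B} :
        Set (Matrix (Fin n) (Fin n) (LaurentPolynomial ℤ))),
        X * Y = Y * X) :
    ∃ w y : LaurentPolynomial ℤ, ∃ v : (LaurentPolynomial ℤ)ˣ,
      A = !![w, (f : LaurentPolynomial ℤ) ^ 2 * y; y, w] ∧
      B = !![0, (v : LaurentPolynomial ℤ);
        ((v⁻¹ : (LaurentPolynomial ℤ)ˣ) : LaurentPolynomial ℤ), 0] := by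
  subst hShat
  set F := (f : LaurentPolynomial ℤ) with hF
  set G := ((f⁻¹ : (LaurentPolynomial ℤ)ˣ) : LaurentPolynomial ℤ) with hG
  have hFG : F * G = 1 := f.mul_inv
  -- TS relation at the 2x2 level
  have hTS0 : Lmat n 0 A * Lmat n 0 !![0, F; G, 0]
      = Lmat n 0 !![0, F; G, 0] * Lmat n 0 A := hTS ⟨0, by omega⟩
  rw [Eta2Aux.Lmat_emb n hn 0 (by omega) A, Eta2Aux.Lmat_emb n hn 0 (by omega) !![0, F; G, 0],
    Eta2Aux.emb_mul, Eta2Aux.emb_mul] at hTS0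
  have eTS := Eta2Aux.emb_inj hTS0
  have eTS00 := congrFun (congrFun eTS 0) 0
  have eTS01 := congrFun (congrFun eTS 0) 1
  simp [Lmat, Matrix.mul_apply, Fin.sum_univ_three] at eTS00 eTS01
  have had : A 1 1 = A 0 0 := by
    linear_combination (-G) * eTS01 + (A 0 0 - A 1 1) * hFG
  have hbb : A 0 1 = F ^ 2 * A 1 0 := by
    linear_combination F * eTS00 - A 0 1 * hFG
  -- V^2 = 1
  have hVV0 : Lmat n 0 B * Lmat n 0 B = 1 := hV2 ⟨0, by omega⟩
  rw [Eta2Aux.Lmat_emb n hn 0 (by omega) B, Eta2Aux.emb_mul, ← Eta2Aux.emb_one n hn] at hVV0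
  have eVV00 := congrFun (congrFun (Eta2Aux.emb_inj hVV0) 0) 0
  simp [Lmat, Matrix.mul_apply, Fin.sum_univ_three, Matrix.one_apply] at eVV00
  -- VSV relation
  have hVSV0 : Lmat n 0 B * Lmat n 1 !![0, F; G, 0] * Lmat n 0 B
      = Lmat n 1 B * Lmat n 0 !![0, F; G, 0] * Lmat n 1 B :=
    hVSV ⟨0, by omega⟩ ⟨1, by omega⟩ (Or.inl rfl)
  rw [Eta2Aux.Lmat_emb n hn 0 (by omega) B, Eta2Aux.Lmat_emb n hn 1 (by omega) B,
    Eta2Aux.Lmat_emb n hn 0 (by omega) !![0, F; G, 0], Eta2Aux.Lmat_emb n hn 1 (by omega) !![0, F; G, 0],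
    Eta2Aux.emb_mul, Eta2Aux.emb_mul, Eta2Aux.emb_mul, Eta2Aux.emb_mul] at hVSV0
  have eVSV := Eta2Aux.emb_inj hVSV0
  have e00 := congrFun (congrFun eVSV 0) 0
  have e22 := congrFun (congrFun eVSV 2) 2
  simp [Lmat, Matrix.mul_apply, Fin.sum_univ_three] at e00 e22
  have hqr : B 0 1 * B 1 0 = 1 := by
    linear_combination eVV00 - B 0 0 * e00
  refine ⟨A 0 0, A 1 0, ⟨B 0 1, B 1 0, hqr, by linear_combination hqr⟩, ?_, ?_⟩
  · ext a b; fin_cases a <;> fin_cases b <;> simp [had, hbb]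
  · ext a b; fin_cases a <;> fin_cases b <;> simp [e00, e22, Units.inv_mk]
end

section
/- (Theorem 4.5, necessity: η'₂ is reducible under the three equalities.) Let n ≥ 3 and f, w, y, v ∈ ℂ with f ≠ 0, v ≠ 0, and suppose f = v, w + f²·y·v⁻¹ = 1, and v·y + w = 1. Let u ∈ ℂⁿ be the vector with coordinates u_k = v^{n−k} for k = 1, …, n. Then every matrix in the family 𝒮 = { L_i(!![0, f; f⁻¹, 0]), L_i(!![w, f²·y; y, w]), L_i(!![0, v; v⁻¹, 0]) : 1 ≤ i ≤ n−1 } fixes u, i.e. M.mulVec u = u for every M ∈ 𝒮. Consequently the line U = ℂ∙u is a submodule of ℂⁿ with ⊥ ≠ U ≠ ⊤ that is invariant under 𝒮, so the representation η'₂ of VST_n is reducible. -/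
/-! Consecutive coordinates of `u = (v^{n-1}, …, v, 1)` are proportional to `(v, 1)`, and
when `f = v` and `v y + w = 1` each of the three `2 × 2` blocks fixes `(v, 1)`; hence every
`L_i(M)` fixes `u`, and the line `ℂ ∙ u` is invariant. It is nonzero because the last
coordinate of `u` is `1`, and proper because `n ≥ 2`. -/

open Matrix

section Lmat

variable {R : Type*} {n i : ℕ}

theorem Lmat_apply_of_ne_left [Zero R] [One R] (M : Matrix (Fin 2) (Fin 2) R) {k : Fin n}
    (hk : k.val ≠ i) (hk' : k.val ≠ i + 1) (j : Fin n) :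
    Lmat n i M k j = (1 : Matrix (Fin n) (Fin n) R) k j := by
  simp [Lmat, one_apply, Fin.ext_iff, hk, hk']

theorem Lmat_apply_of_ne_right [Zero R] [One R] (M : Matrix (Fin 2) (Fin 2) R) (k : Fin n)
    {j : Fin n} (hj : j.val ≠ i) (hj' : j.val ≠ i + 1) :
    Lmat n i M k j = (1 : Matrix (Fin n) (Fin n) R) k j := by
  simp [Lmat, one_apply, Fin.ext_iff, hj, hj']

variable [CommSemiring R]

theorem Lmat_mulVec_apply_of_ne (M : Matrix (Fin 2) (Fin 2) R) (u : Fin n → R) {k : Fin n}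
    (hk : k.val ≠ i) (hk' : k.val ≠ i + 1) : (Lmat n i M *ᵥ u) k = u k := by
  have hrow : Lmat n i M k = (1 : Matrix (Fin n) (Fin n) R) k :=
    funext (Lmat_apply_of_ne_left M hk hk')
  change Lmat n i M k ⬝ᵥ u = u k
  rw [hrow]
  exact congrFun (one_mulVec u) k

theorem Lmat_mulVec_apply_of_eq (M : Matrix (Fin 2) (Fin 2) R) (u : Fin n → R) (hi : i + 1 < n)
    (r : Fin 2) {k : Fin n} (hk : k.val = i + r.val) :
    (Lmat n i M *ᵥ u) k = (M *ᵥ ![u ⟨i, by omega⟩, u ⟨i + 1, hi⟩]) r := by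
  rw [mulVec, dotProduct,
    Fintype.sum_eq_add ⟨i, by omega⟩ ⟨i + 1, hi⟩ (by simp [Fin.ext_iff])]
  · fin_cases r <;> simp_all [Lmat, mulVec_fin_two]
  · rintro j ⟨hj, hj'⟩
    rw [Lmat_apply_of_ne_right M k (fun h => hj (Fin.ext h))
      (fun h => hj' (Fin.ext h)), one_apply_ne, zero_mul]
    rintro rfl
    fin_cases r
    exacts [hj (Fin.ext hk), hj' (Fin.ext hk)]

theorem Lmat_mulVec_eq_self {M : Matrix (Fin 2) (Fin 2) R} {u : Fin n → R} (hi : i + 1 < n)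
    (hM : M *ᵥ ![u ⟨i, by omega⟩, u ⟨i + 1, hi⟩] =
      ![u ⟨i, by omega⟩, u ⟨i + 1, hi⟩]) :
    Lmat n i M *ᵥ u = u := by
  ext k
  by_cases hk : k.val = i
  · rw [Lmat_mulVec_apply_of_eq M u hi 0 (by simpa using hk), hM]
    simp [← hk]
  by_cases hk' : k.val = i + 1
  · rw [Lmat_mulVec_apply_of_eq M u hi 1 (by simpa using hk'), hM]
    simp [← hk']
  exact Lmat_mulVec_apply_of_ne M u hk hk'

theorem Lmat_mulVec_geom_eq_self {M : Matrix (Fin 2) (Fin 2) R} {v : R} (hi : i + 1 < n)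
    (hM : M *ᵥ ![v, 1] = ![v, 1]) :
    Lmat n i M *ᵥ (fun k : Fin n => v ^ (n - 1 - (k : ℕ))) =
      fun k : Fin n => v ^ (n - 1 - (k : ℕ)) := by
  refine Lmat_mulVec_eq_self hi ?_
  have hpair : ![v ^ (n - 1 - i), v ^ (n - 1 - (i + 1))] = v ^ (n - 1 - (i + 1)) • ![v, 1] := by
    rw [show n - 1 - i = n - 1 - (i + 1) + 1 by omega]
    ext r; fin_cases r <;> simp [pow_succ]
  simpa only [hpair, mulVec_smul] using congrArg (v ^ (n - 1 - (i + 1)) • ·) hM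

end Lmat

theorem swap_block_mulVec {K : Type*} [Field K] {v : K} (hv : v ≠ 0) :
    !![0, v; v⁻¹, 0] *ᵥ ![v, 1] = ![v, 1] := by
  ext r; fin_cases r <;> simp [hv]

theorem singular_block_mulVec {R : Type*} [CommRing R] {v w y : R} (h : v * y + w = 1) :
    !![w, v ^ 2 * y; y, w] *ᵥ ![v, 1] = ![v, 1] := by
  rw [mulVec_fin_two]
  ext r; fin_cases r
  · change w * v + v ^ 2 * y * 1 = v
    linear_combination v * h
  · change y * v + w * 1 = 1
    linear_combination h

theorem mulVec_mem_span_singleton {R : Type*} [CommSemiring R] {n : ℕ}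
    {M : Matrix (Fin n) (Fin n) R} {u x : Fin n → R} (hM : M *ᵥ u = u)
    (hx : x ∈ Submodule.span R {u}) :
    M *ᵥ x ∈ Submodule.span R {u} := by
  obtain ⟨c, rfl⟩ := Submodule.mem_span_singleton.mp hx
  exact Submodule.mem_span_singleton.mpr ⟨c, by rw [mulVec_smul, hM]⟩

theorem span_singleton_ne_top_of_two_le {K : Type*} [Field K] {n : ℕ} (hn : 2 ≤ n)
    (u : Fin n → K) : Submodule.span K {u} ≠ ⊤ := by
  intro h
  have := finrank_span_le_card (R := K) ({u} : Set (Fin n → K))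
  rw [h, finrank_top, Module.finrank_fin_fun] at this
  simp only [Set.toFinset_singleton, Finset.card_singleton] at this
  omega

theorem eta2_prime_reducible_general (n : ℕ) (hn : 3 ≤ n) (f w y v : ℂ)
    (hv : v ≠ 0)
    (h1 : f = v) (h3 : v * y + w = 1) :
    (∀ M ∈ ({M | (∃ i : Fin (n - 1), M = Lmat n i.val !![0, f; f⁻¹, 0]) ∨
                 (∃ i : Fin (n - 1), M = Lmat n i.val !![w, f ^ 2 * y; y, w]) ∨
                 (∃ i : Fin (n - 1), M = Lmat n i.val !![0, v; v⁻¹, 0])} :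
        Set (Matrix (Fin n) (Fin n) ℂ)),
      M.mulVec (fun k : Fin n => v ^ (n - 1 - (k : ℕ))) = fun k : Fin n => v ^ (n - 1 - (k : ℕ))) ∧
    Submodule.span ℂ {(fun k => v ^ (n - 1 - (k : ℕ)) : Fin n → ℂ)} ≠ ⊥ ∧
    Submodule.span ℂ {(fun k => v ^ (n - 1 - (k : ℕ)) : Fin n → ℂ)} ≠ ⊤ ∧
    (∀ M ∈ ({M | (∃ i : Fin (n - 1), M = Lmat n i.val !![0, f; f⁻¹, 0]) ∨
                 (∃ i : Fin (n - 1), M = Lmat n i.val !![w, f ^ 2 * y; y, w]) ∨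
                 (∃ i : Fin (n - 1), M = Lmat n i.val !![0, v; v⁻¹, 0])} :
        Set (Matrix (Fin n) (Fin n) ℂ)),
      ∀ x ∈ Submodule.span ℂ {(fun k => v ^ (n - 1 - (k : ℕ)) : Fin n → ℂ)},
        M.mulVec x ∈ Submodule.span ℂ {(fun k => v ^ (n - 1 - (k : ℕ)) : Fin n → ℂ)}) := by
  subst h1
  have hu : (fun k : Fin n => f ^ (n - 1 - (k : ℕ))) ≠ 0 := fun h => by
    simpa using congrFun h ⟨n - 1, by omega⟩
  refine (fun hfix => ⟨hfix, mt Submodule.span_singleton_eq_bot.mp hu,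
    span_singleton_ne_top_of_two_le (by omega) _,
    fun M hM _ => mulVec_mem_span_singleton (hfix M hM)⟩) ?_
  rintro M (⟨i, rfl⟩ | ⟨i, rfl⟩ | ⟨i, rfl⟩)
  all_goals refine Lmat_mulVec_geom_eq_self (by omega) ?_
  exacts [swap_block_mulVec hv, singular_block_mulVec h3, swap_block_mulVec hv]

/-- (Theorem 4.5, necessity.) Under the equalities `f = v`, `w + f²y v⁻¹ = 1` and
`vy + w = 1`, every matrix of the representation `η'₂` fixes the vector
`u = (v^{n-1}, v^{n-2}, …, v, 1)`, so the line it spans is a nontrivial proper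
invariant submodule: `η'₂` is reducible. -/
theorem eta2_prime_reducible (n : ℕ) (hn : 3 ≤ n) (f w y v : ℂ)
    (hf : f ≠ 0) (hv : v ≠ 0)
    (h1 : f = v) (h2 : w + f ^ 2 * y * v⁻¹ = 1) (h3 : v * y + w = 1) :
    (∀ M ∈ ({M | (∃ i : Fin (n - 1), M = Lmat n i.val !![0, f; f⁻¹, 0]) ∨
                 (∃ i : Fin (n - 1), M = Lmat n i.val !![w, f ^ 2 * y; y, w]) ∨
                 (∃ i : Fin (n - 1), M = Lmat n i.val !![0, v; v⁻¹, 0])} :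
        Set (Matrix (Fin n) (Fin n) ℂ)),
      M.mulVec (fun k : Fin n => v ^ (n - 1 - (k : ℕ))) = fun k : Fin n => v ^ (n - 1 - (k : ℕ))) ∧
    Submodule.span ℂ {(fun k => v ^ (n - 1 - (k : ℕ)) : Fin n → ℂ)} ≠ ⊥ ∧
    Submodule.span ℂ {(fun k => v ^ (n - 1 - (k : ℕ)) : Fin n → ℂ)} ≠ ⊤ ∧
    (∀ M ∈ ({M | (∃ i : Fin (n - 1), M = Lmat n i.val !![0, f; f⁻¹, 0]) ∨
                 (∃ i : Fin (n - 1), M = Lmat n i.val !![w, f ^ 2 * y; y, w]) ∨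
                 (∃ i : Fin (n - 1), M = Lmat n i.val !![0, v; v⁻¹, 0])} :
        Set (Matrix (Fin n) (Fin n) ℂ)),
      ∀ x ∈ Submodule.span ℂ {(fun k => v ^ (n - 1 - (k : ℕ)) : Fin n → ℂ)},
        M.mulVec x ∈ Submodule.span ℂ {(fun k => v ^ (n - 1 - (k : ℕ)) : Fin n → ℂ)}) :=
  eta2_prime_reducible_general n hn f w y v hv h1 h3
end

section
/- (Theorem 4.5, sufficiency: irreducibility of η'₂.) Let n ≥ 3 and f, w, y, v ∈ ℂ with f ≠ 0 and v ≠ 0, and suppose that at least one of the following holds: f ≠ v, or w + f²·y·v⁻¹ ≠ 1, or v·y + w ≠ 1. Let 𝒮 = { L_i(!![0, f; f⁻¹, 0]), L_i(!![w, f²·y; y, w]), L_i(!![0, v; v⁻¹, 0]) : 1 ≤ i ≤ n−1 }. Then every submodule U of ℂⁿ that is invariant under 𝒮 (i.e. M.mulVec x ∈ U for all M ∈ 𝒮 and x ∈ U) satisfies U = ⊥ or U = ⊤. That is, the representation η'₂ of VST_n with these parameters is irreducible. -/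
/-!
Let `𝒜` be the algebra of matrices preserving `U`. It contains a diagonal matrix supported on
`{i, i+1}` with nonzero entries there: `L_i(ν) L_i(s) - 1` if `f ≠ v`, and
`L_i(τ) - f y L_i(s) - (1 - f y)` if `f = v`, in which case the hypothesis says exactly
`w - 1 + f y ≠ 0`. The product of two such matrices for consecutive windows isolates an interior
coordinate, while `L_i(s)` exchanges the coordinates `i` and `i + 1` up to nonzero scalars. So if
`U ≠ 0`, some vector of `U` has a nonzero coordinate `1`, whence `e₁ ∈ U` and then every `eₖ ∈ U`.
-/

open Matrix

section Lmat

variable {R : Type*} [Semiring R] {n i : ℕ}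

lemma Lmat_mulVec (hi : i + 1 < n) (M : Matrix (Fin 2) (Fin 2) R) (x : Fin n → R) :
    Lmat n i M *ᵥ x = fun a =>
      if a.val = i then M 0 0 * x ⟨i, by omega⟩ + M 0 1 * x ⟨i + 1, hi⟩
      else if a.val = i + 1 then M 1 0 * x ⟨i, by omega⟩ + M 1 1 * x ⟨i + 1, hi⟩
      else x a := by
  funext a
  simp only [mulVec, dotProduct, Lmat, of_apply]
  split_ifs with h0 h1
  · rw [Fintype.sum_eq_add ⟨i, by omega⟩ ⟨i + 1, hi⟩ (by simp [Fin.ext_iff])]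
    · simp [h0]
    · rintro b ⟨hb0, hb1⟩
      simp only [ne_eq, Fin.ext_iff] at hb0 hb1
      simp [h0, hb0, hb1, Ne.symm hb0]
  · rw [Fintype.sum_eq_add ⟨i, by omega⟩ ⟨i + 1, hi⟩ (by simp [Fin.ext_iff])]
    · simp [h1]
    · rintro b ⟨hb0, hb1⟩
      simp only [ne_eq, Fin.ext_iff] at hb0 hb1
      simp [h1, hb0, hb1, Ne.symm hb1]
  · rw [Fintype.sum_eq_single a]
    · simp [h0, h1]
    · intro b hb
      simp [h0, h1, Fin.val_ne_of_ne hb.symm]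

lemma Lmat_mulVec_single_left (hi : i + 1 < n) (M : Matrix (Fin 2) (Fin 2) R) :
    Lmat n i M *ᵥ Pi.single ⟨i, by omega⟩ 1 =
      M 0 0 • Pi.single ⟨i, by omega⟩ 1 + M 1 0 • Pi.single ⟨i + 1, hi⟩ 1 := by
  rw [Lmat_mulVec hi]
  funext a
  simp only [Pi.single_apply, Pi.add_apply, Pi.smul_apply, Fin.ext_iff]
  split_ifs <;> first | omega | simp

lemma Lmat_mulVec_single_right (hi : i + 1 < n) (M : Matrix (Fin 2) (Fin 2) R) :
    Lmat n i M *ᵥ Pi.single ⟨i + 1, hi⟩ 1 =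
      M 0 1 • Pi.single ⟨i, by omega⟩ 1 + M 1 1 • Pi.single ⟨i + 1, hi⟩ 1 := by
  rw [Lmat_mulVec hi]
  funext a
  simp only [Pi.single_apply, Pi.add_apply, Pi.smul_apply, Fin.ext_iff]
  split_ifs <;> first | omega | simp

end Lmat

section Identities

variable {K : Type*} [Field K] {n i : ℕ}

lemma Lmat_antidiag_mul_Lmat_antidiag_sub_one (hi : i + 1 < n) (f v : K) :
    Lmat n i !![0, v; v⁻¹, 0] * Lmat n i !![0, f; f⁻¹, 0] - 1 =
      diagonal (Pi.single ⟨i, by omega⟩ (v * f⁻¹ - 1) + Pi.single ⟨i + 1, hi⟩ (v⁻¹ * f - 1)) := by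
  refine ext_iff_mulVec.2 fun x => funext fun ⟨c, hc⟩ => ?_
  rw [sub_mulVec, one_mulVec, ← mulVec_mulVec, Lmat_mulVec hi, Lmat_mulVec hi]
  simp only [mulVec_diagonal, Pi.sub_apply, Pi.add_apply, Pi.single_apply, Fin.ext_iff,
    of_apply, cons_val', cons_val_zero, cons_val_one, cons_val_fin_one]
  split_ifs <;> subst_vars <;> first | omega | ring1

lemma Lmat_sub_smul_Lmat_antidiag_sub_smul_one {f : K} (hf : f ≠ 0) (hi : i + 1 < n)
    (w y : K) :
    Lmat n i !![w, f ^ 2 * y; y, w] - (f * y) • Lmat n i !![0, f; f⁻¹, 0] - (1 - f * y) • 1 =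
      diagonal
        (Pi.single ⟨i, by omega⟩ (w - 1 + f * y) + Pi.single ⟨i + 1, hi⟩ (w - 1 + f * y)) := by
  refine ext_iff_mulVec.2 fun x => funext fun ⟨c, hc⟩ => ?_
  rw [sub_mulVec, sub_mulVec, smul_mulVec, smul_mulVec, one_mulVec, Lmat_mulVec hi, Lmat_mulVec hi]
  simp only [mulVec_diagonal, Pi.sub_apply, Pi.add_apply, Pi.smul_apply, smul_eq_mul,
    Pi.single_apply, Fin.ext_iff, of_apply, cons_val', cons_val_zero, cons_val_one,
    cons_val_fin_one]
  split_ifs <;> subst_vars <;> first | omega | ring1 | (field_simp; ring1)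

end Identities

lemma Fin.iff_of_forall_iff_succ {n : ℕ} {P : Fin n → Prop}
    (h : ∀ k (hk : k + 1 < n), P ⟨k, by omega⟩ ↔ P ⟨k + 1, hk⟩) (j k : Fin n) : P j ↔ P k := by
  have to_zero : ∀ k (hk : k < n), P ⟨k, hk⟩ ↔ P ⟨0, by omega⟩ := by
    intro k
    induction k with
    | zero => exact fun _ => Iff.rfl
    | succ k ih => exact fun hk => (h k hk).symm.trans (ih _)
  exact (to_zero j j.2).trans (to_zero k k.2).symm

def Submodule.invariantMatrices {R ι : Type*} [CommSemiring R] [Fintype ι] [DecidableEq ι]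
    (U : Submodule R (ι → R)) : Subalgebra R (Matrix ι ι R) where
  carrier := {A | ∀ x ∈ U, A *ᵥ x ∈ U}
  mul_mem' {A B} hA hB x hx := by
    rw [← mulVec_mulVec]
    exact hA _ (hB x hx)
  add_mem' {A B} hA hB x hx := by
    rw [add_mulVec]
    exact U.add_mem (hA x hx) (hB x hx)
  algebraMap_mem' c x hx := by
    rw [Algebra.algebraMap_eq_smul_one, smul_mulVec, one_mulVec]
    exact U.smul_mem c hx

lemma Submodule.eq_top_of_forall_single_mem {R ι : Type*} [Semiring R] [Fintype ι] [DecidableEq ι]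
    {U : Submodule R (ι → R)} (h : ∀ k, Pi.single k 1 ∈ U) : U = ⊤ := by
  rw [eq_top_iff, ← (Pi.basisFun R ι).span_eq, Submodule.span_le]
  rintro _ ⟨k, rfl⟩
  simpa using h k

section Irreducibility

variable {K : Type*} [Field K] {n : ℕ} {U : Submodule K (Fin n → K)} {f : K}

lemma single_mem_iff_single_succ_mem (hf : f ≠ 0) {i : ℕ} (hi : i + 1 < n)
    (hS : Lmat n i !![0, f; f⁻¹, 0] ∈ U.invariantMatrices) :
    Pi.single ⟨i, by omega⟩ 1 ∈ U ↔ Pi.single ⟨i + 1, hi⟩ 1 ∈ U := by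
  constructor
  · intro h
    simpa [Lmat_mulVec_single_left hi, Submodule.smul_mem_iff _ (inv_ne_zero hf)] using hS _ h
  · intro h
    simpa [Lmat_mulVec_single_right hi, Submodule.smul_mem_iff _ hf] using hS _ h

lemma forall_apply_eq_zero_iff_succ (hf : f ≠ 0) {i : ℕ} (hi : i + 1 < n)
    (hS : Lmat n i !![0, f; f⁻¹, 0] ∈ U.invariantMatrices) :
    (∀ x ∈ U, x ⟨i, by omega⟩ = 0) ↔ (∀ x ∈ U, x ⟨i + 1, hi⟩ = 0) := by
  constructor
  · intro h x hx
    simpa [Lmat_mulVec hi, hf] using h _ (hS x hx)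
  · intro h x hx
    simpa [Lmat_mulVec hi, hf] using h _ (hS x hx)

lemma single_mem_of_apply_ne_zero {a b : K} (ha : a ≠ 0) (hb : b ≠ 0)
    (hD : ∀ i (hi : i + 1 < n),
      diagonal (Pi.single ⟨i, by omega⟩ a + Pi.single ⟨i + 1, hi⟩ b) ∈ U.invariantMatrices)
    {i : ℕ} (hi : i + 2 < n) {x : Fin n → K} (hx : x ∈ U) (hxi : x ⟨i + 1, by omega⟩ ≠ 0) :
    Pi.single ⟨i + 1, by omega⟩ 1 ∈ U := by
  have isolate : diagonal (Pi.single ⟨i, by omega⟩ a + Pi.single ⟨i + 1, by omega⟩ b) *ᵥ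
      (diagonal (Pi.single ⟨i + 1, by omega⟩ a + Pi.single ⟨i + 2, hi⟩ b) *ᵥ x) =
      (b * a * x ⟨i + 1, by omega⟩) • Pi.single ⟨i + 1, by omega⟩ 1 := by
    funext ⟨c, hc⟩
    simp only [mulVec_diagonal, Pi.add_apply, Pi.single_apply, Pi.smul_apply, Fin.ext_iff]
    split_ifs <;> subst_vars <;> first | omega | ring1
  have hmem := hD i (by omega) _ (hD (i + 1) hi x hx)
  rwa [isolate, Submodule.smul_mem_iff _ (by simp [ha, hb, hxi])] at hmem

theorem eq_bot_or_eq_top_of_swaps_mem_of_diagonals_mem (hn : 3 ≤ n) (hf : f ≠ 0)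
    (hS : ∀ i (hi : i + 1 < n), Lmat n i !![0, f; f⁻¹, 0] ∈ U.invariantMatrices)
    {a b : K} (ha : a ≠ 0) (hb : b ≠ 0)
    (hD : ∀ i (hi : i + 1 < n),
      diagonal (Pi.single ⟨i, by omega⟩ a + Pi.single ⟨i + 1, hi⟩ b) ∈ U.invariantMatrices) :
    U = ⊥ ∨ U = ⊤ := by
  refine or_iff_not_imp_left.2 fun hne => ?_
  obtain ⟨x, hxU, hx⟩ := Submodule.exists_mem_ne_zero_of_ne_bot hne
  obtain ⟨j, hj⟩ := Function.ne_iff.1 hx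
  obtain ⟨y, hyU, hy⟩ : ∃ y ∈ U, y ⟨1, by omega⟩ ≠ 0 := by
    by_contra! h
    have hU_j := (Fin.iff_of_forall_iff_succ (P := fun k => ∀ y ∈ U, y k = 0)
      (fun i hi => forall_apply_eq_zero_iff_succ hf hi (hS i hi)) _ j).1 h
    exact hj (hU_j x hxU)
  have he₁ := single_mem_of_apply_ne_zero ha hb hD (i := 0) (by omega) hyU hy
  exact Submodule.eq_top_of_forall_single_mem fun k =>
    (Fin.iff_of_forall_iff_succ (P := fun k => Pi.single k 1 ∈ U)
      (fun i hi => single_mem_iff_single_succ_mem hf hi (hS i hi)) _ k).1 he₁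

end Irreducibility

theorem eta2_prime_irreducible_general (n : ℕ) (hn : 3 ≤ n) (f w y v : ℂ)
    (hf : f ≠ 0)
    (hcond : f ≠ v ∨ w + f ^ 2 * y * v⁻¹ ≠ 1 ∨ v * y + w ≠ 1)
    (U : Submodule ℂ (Fin n → ℂ))
    (hU : ∀ M ∈ ({M | (∃ i : Fin (n - 1), M = Lmat n i.val !![0, f; f⁻¹, 0]) ∨
                      (∃ i : Fin (n - 1), M = Lmat n i.val !![w, f ^ 2 * y; y, w]) ∨
                      (∃ i : Fin (n - 1), M = Lmat n i.val !![0, v; v⁻¹, 0])} :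
        Set (Matrix (Fin n) (Fin n) ℂ)),
      ∀ x ∈ U, M.mulVec x ∈ U) :
    U = ⊥ ∨ U = ⊤ := by
  have hS (i : ℕ) (hi : i + 1 < n) : Lmat n i !![0, f; f⁻¹, 0] ∈ U.invariantMatrices :=
    hU _ (Or.inl ⟨⟨i, by omega⟩, rfl⟩)
  have hT (i : ℕ) (hi : i + 1 < n) : Lmat n i !![w, f ^ 2 * y; y, w] ∈ U.invariantMatrices :=
    hU _ (Or.inr (Or.inl ⟨⟨i, by omega⟩, rfl⟩))
  have hN (i : ℕ) (hi : i + 1 < n) : Lmat n i !![0, v; v⁻¹, 0] ∈ U.invariantMatrices :=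
    hU _ (Or.inr (Or.inr ⟨⟨i, by omega⟩, rfl⟩))
  rcases eq_or_ne f v with rfl | hfv
  · have hc : w - 1 + f * y ≠ 0 := by
      rw [show f ^ 2 * y * f⁻¹ = f * y by field_simp] at hcond
      rcases hcond with h | h | h
      · exact absurd rfl h
      · exact fun h0 => h (by linear_combination h0)
      · exact fun h0 => h (by linear_combination h0)
    refine eq_bot_or_eq_top_of_swaps_mem_of_diagonals_mem hn hf hS hc hc fun i hi => ?_
    rw [← Lmat_sub_smul_Lmat_antidiag_sub_smul_one hf hi]
    exact sub_mem (sub_mem (hT i hi) (Subalgebra.smul_mem _ (hS i hi) _))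
      (Subalgebra.smul_mem _ (one_mem _) _)
  · refine eq_bot_or_eq_top_of_swaps_mem_of_diagonals_mem hn hf hS (a := v * f⁻¹ - 1)
      (b := v⁻¹ * f - 1) (sub_ne_zero.2 fun h => hfv (eq_of_mul_inv_eq_one h).symm)
      (sub_ne_zero.2 fun h => hfv (eq_of_inv_mul_eq_one h).symm) fun i hi => ?_
    rw [← Lmat_antidiag_mul_Lmat_antidiag_sub_one hi]
    exact sub_mem (mul_mem (hN i hi) (hS i hi)) (one_mem _)

/-- (Theorem 4.5, sufficiency.) If `f ≠ v`, or `w + f²y v⁻¹ ≠ 1`, or `vy + w ≠ 1`, then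
the only submodules of `ℂⁿ` invariant under all the matrices of the representation
`η'₂` are `⊥` and `⊤`: the representation `η'₂` is irreducible. -/
theorem eta2_prime_irreducible (n : ℕ) (hn : 3 ≤ n) (f w y v : ℂ)
    (hf : f ≠ 0) (hv : v ≠ 0)
    (hcond : f ≠ v ∨ w + f ^ 2 * y * v⁻¹ ≠ 1 ∨ v * y + w ≠ 1)
    (U : Submodule ℂ (Fin n → ℂ))
    (hU : ∀ M ∈ ({M | (∃ i : Fin (n - 1), M = Lmat n i.val !![0, f; f⁻¹, 0]) ∨
                      (∃ i : Fin (n - 1), M = Lmat n i.val !![w, f ^ 2 * y; y, w]) ∨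
                      (∃ i : Fin (n - 1), M = Lmat n i.val !![0, v; v⁻¹, 0])} :
        Set (Matrix (Fin n) (Fin n) ℂ)),
      ∀ x ∈ U, M.mulVec x ∈ U) :
    U = ⊥ ∨ U = ⊤ :=
  eta2_prime_irreducible_general n hn f w y v hf hcond U hU
end

section
/- (Theorem 5.1: classification of complex homogeneous 2-local representations of VST_n.) Let n ≥ 3 and let S, T, V be invertible 2×2 complex matrices such that the n×n matrices S_i := L_i(S), T_i := L_i(T), V_i := L_i(V) for 1 ≤ i ≤ n−1 satisfy all the defining relations of VST_n: S_i² = 1 and V_i² = 1 for all i; T_i S_i = S_i T_i for all i; S_i S_j T_i = T_j S_i S_j, V_i V_j V_i = V_j V_i V_j, V_i S_j V_i = V_j S_i V_j, and V_i T_j V_i = V_j T_i V_j for |i−j| = 1; and any two of S_i, T_i, V_i, S_j, T_j, V_j commute for |i−j| ≥ 2. Then (S, T, V) is given by one of the following six families: (1) there exist b, x, y, v ∈ ℂ with b ≠ 0, v ≠ 0, x² − y²/b² ≠ 0, such that S = !![0, b; b⁻¹, 0], T = !![x, y; y/b², x], V = !![0, v; v⁻¹, 0]; (2) there exist b, c,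 d, v ∈ ℂ with d² = 1 − b·c and v ≠ 0, such that S = !![−d, b; c, d], T = I₂, V = !![0, v; v⁻¹, 0]; (3) there exist b, c, d, v ∈ ℂ with d² = 1 − b·c and v ≠ 0, such that S = !![d, b; c, −d], T = I₂, V = !![0, v; v⁻¹, 0]; (4) there exists v ≠ 0 such that S = −I₂, T = I₂, V = !![0, v; v⁻¹, 0]; (5) there exists v ≠ 0 such that S = I₂, T = I₂, V = !![0, v; v⁻¹, 0]; (6) S = I₂, T = I₂, V = I₂. (Here d plays the role of √(1−bc) in the paper's families Υ₂ and Υ₃.) -/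
variable {n : ℕ}

/-- equivalence Fin 3 ⊕ Fin (n-3) ≃ Fin n for 3 ≤ n -/
def embEquiv (hn : 3 ≤ n) : Fin 3 ⊕ Fin (n - 3) ≃ Fin n :=
  finSumFinEquiv.trans (finCongr (by omega))

/-- embedding of a 3×3 matrix into n×n, identity outside -/
def emb (hn : 3 ≤ n) (A : Matrix (Fin 3) (Fin 3) ℂ) : Matrix (Fin n) (Fin n) ℂ :=
  (Matrix.fromBlocks A 0 0 (1 : Matrix (Fin (n-3)) (Fin (n-3)) ℂ)).submatrix
    (embEquiv hn).symm (embEquiv hn).symm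

lemma embEquiv_symm_lt (hn : 3 ≤ n) (a : Fin n) (ha : a.val < 3) :
    (embEquiv hn).symm a = Sum.inl ⟨a.val, ha⟩ := by
  rw [Equiv.symm_apply_eq]
  apply Fin.ext
  simp [embEquiv, finSumFinEquiv]

lemma embEquiv_symm_ge (hn : 3 ≤ n) (a : Fin n) (ha : ¬ a.val < 3) :
    (embEquiv hn).symm a = Sum.inr ⟨a.val - 3, by omega⟩ := by
  rw [Equiv.symm_apply_eq]
  apply Fin.ext
  simp [embEquiv, finSumFinEquiv]
  omega

lemma emb_mul (hn : 3 ≤ n) (A B : Matrix (Fin 3) (Fin 3) ℂ) :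
    emb hn A * emb hn B = emb hn (A * B) := by
  unfold emb
  rw [Matrix.submatrix_mul_equiv, Matrix.fromBlocks_multiply]
  simp

lemma emb_one (hn : 3 ≤ n) : emb hn 1 = 1 := by
  unfold emb
  rw [Matrix.fromBlocks_one, Matrix.submatrix_one_equiv]

lemma emb_inj (hn : 3 ≤ n) {A B : Matrix (Fin 3) (Fin 3) ℂ}
    (h : emb hn A = emb hn B) : A = B := by
  ext i j
  have h2 := Matrix.ext_iff.mpr h (embEquiv hn (Sum.inl i)) (embEquiv hn (Sum.inl j))
  simpa [emb] using h2

lemma Lmat_zero_eq (hn : 3 ≤ n) (M : Matrix (Fin 2) (Fin 2) ℂ) :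
    Lmat n 0 M = emb hn !![M 0 0, M 0 1, 0; M 1 0, M 1 1, 0; 0, 0, 1] := by
  ext a b
  by_cases ha : a.val < 3 <;> by_cases hb : b.val < 3
  · rw [emb, Matrix.submatrix_apply, embEquiv_symm_lt hn a ha, embEquiv_symm_lt hn b hb]
    have ha' : a.val = 0 ∨ a.val = 1 ∨ a.val = 2 := by omega
    have hb' : b.val = 0 ∨ b.val = 1 ∨ b.val = 2 := by omega
    rcases ha' with h1 | h1 | h1 <;> rcases hb' with h2 | h2 | h2 <;>
      simp [Lmat, h1, h2, Matrix.fromBlocks, Fin.ext_iff, Matrix.vecHead, Matrix.vecTail]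
  · rw [emb, Matrix.submatrix_apply, embEquiv_symm_lt hn a ha, embEquiv_symm_ge hn b hb]
    simp only [Lmat, Matrix.of_apply, Matrix.fromBlocks, Matrix.submatrix_apply,
      Sum.elim_inl, Sum.elim_inr, Matrix.zero_apply]
    split_ifs <;> first | rfl | (exfalso; omega)
  · rw [emb, Matrix.submatrix_apply, embEquiv_symm_ge hn a ha, embEquiv_symm_lt hn b hb]
    simp only [Lmat, Matrix.of_apply, Matrix.fromBlocks, Matrix.submatrix_apply,
      Sum.elim_inl, Sum.elim_inr, Matrix.zero_apply]
    split_ifs <;> first | rfl | (exfalso; omega)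
  · rw [emb, Matrix.submatrix_apply, embEquiv_symm_ge hn a ha, embEquiv_symm_ge hn b hb]
    simp only [Lmat, Matrix.of_apply, Matrix.fromBlocks, Matrix.submatrix_apply,
      Sum.elim_inl, Sum.elim_inr, Matrix.one_apply, Fin.ext_iff, Fin.mk.injEq]
    split_ifs <;> first | rfl | (exfalso; omega)

lemma Lmat_one_eq (hn : 3 ≤ n) (M : Matrix (Fin 2) (Fin 2) ℂ) :
    Lmat n 1 M = emb hn !![1, 0, 0; 0, M 0 0, M 0 1; 0, M 1 0, M 1 1] := by
  ext a b
  by_cases ha : a.val < 3 <;> by_cases hb : b.val < 3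
  · rw [emb, Matrix.submatrix_apply, embEquiv_symm_lt hn a ha, embEquiv_symm_lt hn b hb]
    have ha' : a.val = 0 ∨ a.val = 1 ∨ a.val = 2 := by omega
    have hb' : b.val = 0 ∨ b.val = 1 ∨ b.val = 2 := by omega
    rcases ha' with h1 | h1 | h1 <;> rcases hb' with h2 | h2 | h2 <;>
      simp [Lmat, h1, h2, Matrix.fromBlocks, Fin.ext_iff, Matrix.vecHead, Matrix.vecTail]
  · rw [emb, Matrix.submatrix_apply, embEquiv_symm_lt hn a ha, embEquiv_symm_ge hn b hb]
    simp only [Lmat, Matrix.of_apply, Matrix.fromBlocks, Matrix.submatrix_apply,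
      Sum.elim_inl, Sum.elim_inr, Matrix.zero_apply]
    split_ifs <;> first | rfl | (exfalso; omega)
  · rw [emb, Matrix.submatrix_apply, embEquiv_symm_ge hn a ha, embEquiv_symm_lt hn b hb]
    simp only [Lmat, Matrix.of_apply, Matrix.fromBlocks, Matrix.submatrix_apply,
      Sum.elim_inl, Sum.elim_inr, Matrix.zero_apply]
    split_ifs <;> first | rfl | (exfalso; omega)
  · rw [emb, Matrix.submatrix_apply, embEquiv_symm_ge hn a ha, embEquiv_symm_ge hn b hb]
    simp only [Lmat, Matrix.of_apply, Matrix.fromBlocks, Matrix.submatrix_apply,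
      Sum.elim_inl, Sum.elim_inr, Matrix.one_apply, Fin.ext_iff, Fin.mk.injEq]
    split_ifs <;> first | rfl | (exfalso; omega)



set_option maxHeartbeats 1000000 in
/-- (Theorem 5.1.) Classification of all complex homogeneous 2-local representations of
`VST_n` for `n ≥ 3`: the triple of `2 × 2` blocks `(S, T, V)` belongs to one of six
explicit families. -/
theorem classification_two_local_reps (n : ℕ) (hn : 3 ≤ n)
    (S T V : Matrix (Fin 2) (Fin 2) ℂ)
    (hS : IsUnit S) (hT : IsUnit T) (hV : IsUnit V)
    (hS2 : ∀ i : Fin (n - 1), Lmat n i.val S * Lmat n i.val S = 1)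
    (hV2 : ∀ i : Fin (n - 1), Lmat n i.val V * Lmat n i.val V = 1)
    (hTS : ∀ i : Fin (n - 1), Lmat n i.val T * Lmat n i.val S
      = Lmat n i.val S * Lmat n i.val T)
    (hSST : ∀ i j : Fin (n - 1), (i.val + 1 = j.val ∨ j.val + 1 = i.val) →
      Lmat n i.val S * Lmat n j.val S * Lmat n i.val T
        = Lmat n j.val T * Lmat n i.val S * Lmat n j.val S)
    (hVVV : ∀ i j : Fin (n - 1), (i.val + 1 = j.val ∨ j.val + 1 = i.val) →
      Lmat n i.val V * Lmat n j.val V * Lmat n i.val V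
        = Lmat n j.val V * Lmat n i.val V * Lmat n j.val V)
    (hVSV : ∀ i j : Fin (n - 1), (i.val + 1 = j.val ∨ j.val + 1 = i.val) →
      Lmat n i.val V * Lmat n j.val S * Lmat n i.val V
        = Lmat n j.val V * Lmat n i.val S * Lmat n j.val V)
    (hVTV : ∀ i j : Fin (n - 1), (i.val + 1 = j.val ∨ j.val + 1 = i.val) →
      Lmat n i.val V * Lmat n j.val T * Lmat n i.val V
        = Lmat n j.val V * Lmat n i.val T * Lmat n j.val V)
    (hcomm : ∀ i j : Fin (n - 1), (i.val + 2 ≤ j.val ∨ j.val + 2 ≤ i.val) →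
      ∀ X ∈ ({Lmat n i.val S, Lmat n i.val T, Lmat n i.val V} :
        Set (Matrix (Fin n) (Fin n) ℂ)),
      ∀ Y ∈ ({Lmat n j.val S, Lmat n j.val T, Lmat n j.val V} :
        Set (Matrix (Fin n) (Fin n) ℂ)),
        X * Y = Y * X) :
    (∃ b x y v : ℂ, b ≠ 0 ∧ v ≠ 0 ∧ x ^ 2 - y ^ 2 / b ^ 2 ≠ 0 ∧
      S = !![0, b; b⁻¹, 0] ∧ T = !![x, y; y / b ^ 2, x] ∧ V = !![0, v; v⁻¹, 0]) ∨
    (∃ b c d v : ℂ, d ^ 2 = 1 - b * c ∧ v ≠ 0 ∧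
      S = !![-d, b; c, d] ∧ T = 1 ∧ V = !![0, v; v⁻¹, 0]) ∨
    (∃ b c d v : ℂ, d ^ 2 = 1 - b * c ∧ v ≠ 0 ∧
      S = !![d, b; c, -d] ∧ T = 1 ∧ V = !![0, v; v⁻¹, 0]) ∨
    (∃ v : ℂ, v ≠ 0 ∧
      S = !![-1, 0; 0, -1] ∧ T = 1 ∧ V = !![0, v; v⁻¹, 0]) ∨
    (∃ v : ℂ, v ≠ 0 ∧
      S = 1 ∧ T = 1 ∧ V = !![0, v; v⁻¹, 0]) ∨
    (S = 1 ∧ T = 1 ∧ V = 1) := by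
  have h0 : (0 : ℕ) < n - 1 := by omega
  have h1 : (1 : ℕ) < n - 1 := by omega
  have hS2' : Lmat n 0 S * Lmat n 0 S = 1 := hS2 ⟨0, h0⟩
  have hV2' : Lmat n 0 V * Lmat n 0 V = 1 := hV2 ⟨0, h0⟩
  have hTS' : Lmat n 0 T * Lmat n 0 S = Lmat n 0 S * Lmat n 0 T := hTS ⟨0, h0⟩
  have hE : Lmat n 0 S * Lmat n 1 S * Lmat n 0 T
      = Lmat n 1 T * Lmat n 0 S * Lmat n 1 S := hSST ⟨0, h0⟩ ⟨1, h1⟩ (Or.inl rfl)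
  have hF : Lmat n 1 S * Lmat n 0 S * Lmat n 1 T
      = Lmat n 0 T * Lmat n 1 S * Lmat n 0 S := hSST ⟨1, h1⟩ ⟨0, h0⟩ (Or.inr rfl)
  have hB : Lmat n 0 V * Lmat n 1 V * Lmat n 0 V
      = Lmat n 1 V * Lmat n 0 V * Lmat n 1 V := hVVV ⟨0, h0⟩ ⟨1, h1⟩ (Or.inl rfl)
  have hW : Lmat n 0 V * Lmat n 1 S * Lmat n 0 V
      = Lmat n 1 V * Lmat n 0 S * Lmat n 1 V := hVSV ⟨0, h0⟩ ⟨1, h1⟩ (Or.inl rfl)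
  have hX : Lmat n 0 V * Lmat n 1 T * Lmat n 0 V
      = Lmat n 1 V * Lmat n 0 T * Lmat n 1 V := hVTV ⟨0, h0⟩ ⟨1, h1⟩ (Or.inl rfl)
  clear hS2 hV2 hTS hSST hVVV hVSV hVTV hcomm hS hV
  simp only [Lmat_zero_eq hn, Lmat_one_eq hn, emb_mul hn] at hS2' hV2' hTS' hE hF hB hW hX
  rw [← emb_one hn] at hS2' hV2'
  have hS2c := emb_inj hn hS2'
  have hV2c := emb_inj hn hV2'
  have hTSc := emb_inj hn hTS'
  have hEc := emb_inj hn hE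
  have hFc := emb_inj hn hF
  have hBc := emb_inj hn hB
  have hWc := emb_inj hn hW
  have hXc := emb_inj hn hX
  clear hS2' hV2' hTS' hE hF hB hW hX
  simp only [Matrix.mul_fin_three, Matrix.one_fin_three] at hS2c hV2c hTSc hEc hFc hBc hWc hXc
  -- scalar extraction
  have sa : S 0 0 * S 0 0 + S 0 1 * S 1 0 = 1 := by
    have e := Matrix.ext_iff.mpr hS2c 0 0; simp at e; first | linear_combination e | linear_combination -e
  have sb : S 0 0 * S 0 1 + S 0 1 * S 1 1 = 0 := by
    have e := Matrix.ext_iff.mpr hS2c 0 1; simp at e; first | linear_combination e | linear_combination -e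
  have sc : S 1 0 * S 0 0 + S 1 1 * S 1 0 = 0 := by
    have e := Matrix.ext_iff.mpr hS2c 1 0; simp at e; first | linear_combination e | linear_combination -e
  have sd : S 1 0 * S 0 1 + S 1 1 * S 1 1 = 1 := by
    have e := Matrix.ext_iff.mpr hS2c 1 1; simp at e; first | linear_combination e | linear_combination -e
  have pv : V 0 0 * V 0 0 + V 0 1 * V 1 0 = 1 := by
    have e := Matrix.ext_iff.mpr hV2c 0 0; simp at e; first | linear_combination e | linear_combination -e
  have qv : V 0 0 * V 0 1 + V 0 1 * V 1 1 = 0 := by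
    have e := Matrix.ext_iff.mpr hV2c 0 1; simp at e; first | linear_combination e | linear_combination -e
  have rv : V 1 0 * V 0 0 + V 1 1 * V 1 0 = 0 := by
    have e := Matrix.ext_iff.mpr hV2c 1 0; simp at e; first | linear_combination e | linear_combination -e
  have sv : V 1 0 * V 0 1 + V 1 1 * V 1 1 = 1 := by
    have e := Matrix.ext_iff.mpr hV2c 1 1; simp at e; first | linear_combination e | linear_combination -e
  have t1 : T 0 0 * S 0 0 + T 0 1 * S 1 0 = S 0 0 * T 0 0 + S 0 1 * T 1 0 := by
    have e := Matrix.ext_iff.mpr hTSc 0 0; simp at e; first | linear_combination e | linear_combination -e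
  have t2 : T 0 0 * S 0 1 + T 0 1 * S 1 1 = S 0 0 * T 0 1 + S 0 1 * T 1 1 := by
    have e := Matrix.ext_iff.mpr hTSc 0 1; simp at e; first | linear_combination e | linear_combination -e
  have E11 : S 0 0 * T 0 0 + S 0 0 * S 0 1 * T 1 0 = S 0 0 := by
    have e := Matrix.ext_iff.mpr hEc 0 0; simp at e; first | linear_combination e | linear_combination -e
  have E21 : S 1 1 * S 0 0 * T 1 0 = 0 := by
    have e := Matrix.ext_iff.mpr hEc 1 0; simp at e; first | linear_combination e | linear_combination -e
  have E22 : S 1 1 * S 0 0 * T 1 1 = S 1 1 * S 0 0 * T 0 0 := by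
    have e := Matrix.ext_iff.mpr hEc 1 1; simp at e; first | linear_combination e | linear_combination -e
  have E23 : T 0 0 * S 1 1 * S 0 1 + T 0 1 * S 1 1 = S 1 1 * S 0 1 := by
    have e := Matrix.ext_iff.mpr hEc 1 2; simp at e; first | linear_combination e | linear_combination -e
  have F12 : S 0 0 * S 1 1 * T 0 1 = 0 := by
    have e := Matrix.ext_iff.mpr hFc 0 1; simp at e; first | linear_combination e | linear_combination -e
  have B11 : V 0 0 * V 0 0 + V 0 0 * V 0 1 * V 1 0 = V 0 0 := by
    have e := Matrix.ext_iff.mpr hBc 0 0; simp at e; first | linear_combination e | linear_combination -e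
  have B22 : V 0 0 * V 1 1 * V 1 1 = V 0 0 * V 0 0 * V 1 1 := by
    have e := Matrix.ext_iff.mpr hBc 1 1; simp at e; first | linear_combination e | linear_combination -e
  have W11 : V 0 0 * V 0 0 + V 0 1 * S 0 0 * V 1 0 = S 0 0 := by
    have e := Matrix.ext_iff.mpr hWc 0 0; simp at e; first | linear_combination e | linear_combination -e
  have W12 : V 0 0 * V 0 1 + V 0 1 * S 0 0 * V 1 1 = S 0 1 * V 0 0 := by
    have e := Matrix.ext_iff.mpr hWc 0 1; simp at e; first | linear_combination e | linear_combination -e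
  have W21 : V 1 0 * V 0 0 + V 1 1 * S 0 0 * V 1 0 = V 0 0 * S 1 0 := by
    have e := Matrix.ext_iff.mpr hWc 1 0; simp at e; first | linear_combination e | linear_combination -e
  have W33 : S 1 1 = V 1 0 * S 1 1 * V 0 1 + V 1 1 * V 1 1 := by
    have e := Matrix.ext_iff.mpr hWc 2 2; simp at e; first | linear_combination e | linear_combination -e
  have X11 : V 0 0 * V 0 0 + V 0 1 * T 0 0 * V 1 0 = T 0 0 := by
    have e := Matrix.ext_iff.mpr hXc 0 0; simp at e; first | linear_combination e | linear_combination -e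
  have X12 : V 0 0 * V 0 1 + V 0 1 * T 0 0 * V 1 1 = T 0 1 * V 0 0 := by
    have e := Matrix.ext_iff.mpr hXc 0 1; simp at e; first | linear_combination e | linear_combination -e
  have X21 : V 1 0 * V 0 0 + V 1 1 * T 0 0 * V 1 0 = V 0 0 * T 1 0 := by
    have e := Matrix.ext_iff.mpr hXc 1 0; simp at e; first | linear_combination e | linear_combination -e
  have X33 : T 1 1 = V 1 0 * T 1 1 * V 0 1 + V 1 1 * V 1 1 := by
    have e := Matrix.ext_iff.mpr hXc 2 2; simp at e; first | linear_combination e | linear_combination -e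
  clear hS2c hV2c hTSc hEc hFc hBc hWc hXc
  set a := S 0 0 with ha
  set b := S 0 1 with hb
  set c := S 1 0 with hc
  set d := S 1 1 with hd
  set x := T 0 0 with hx
  set y := T 0 1 with hy
  set z := T 1 0 with hz
  set w := T 1 1 with hw
  set p := V 0 0 with hpp
  set q := V 0 1 with hqq
  set r := V 1 0 with hrr
  set s := V 1 1 with hss
  -- dichotomy for V
  have hVd : (p = 1 ∧ q = 0 ∧ r = 0 ∧ s = 1) ∨ (p = 0 ∧ s = 0 ∧ q * r = 1) := by
    have hps : (s - p) * (s + p) = 0 := by linear_combination sv - pv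
    rcases mul_eq_zero.mp hps with h | h
    · by_cases hp0 : p = 0
      · exact Or.inr ⟨hp0, by linear_combination h + hp0, by linear_combination pv - p * hp0⟩
      · left
        have hq0 : q = 0 := by
          have h2 : 2 * p * q = 0 := by linear_combination qv - q * h
          rcases mul_eq_zero.mp h2 with h3 | h3
          · exact absurd (by linear_combination h3 / 2) hp0
          · exact h3
        have hr0 : r = 0 := by
          have h2 : 2 * p * r = 0 := by linear_combination rv - r * h
          rcases mul_eq_zero.mp h2 with h3 | h3
          · exact absurd (by linear_combination h3 / 2) hp0
          · exact h3
        have hp1 : p = 1 := by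
          have h2 : p * (p - 1) = 0 := by linear_combination B11 - p * r * hq0
          rcases mul_eq_zero.mp h2 with h3 | h3
          · exact absurd h3 hp0
          · linear_combination h3
        exact ⟨hp1, hq0, hr0, by linear_combination h + hp1⟩
    · right
      have hp0 : p = 0 := by
        have h2 : p * (p * p) = 0 := by linear_combination B22 / 2 + (p * (2 * p - s) / 2) * h
        rcases mul_eq_zero.mp h2 with h3 | h3
        · exact h3
        · rcases mul_eq_zero.mp h3 with h4 | h4 <;> exact h4
      exact ⟨hp0, by linear_combination h - hp0, by linear_combination pv - p * hp0⟩
  rcases hVd with ⟨hp1, hq0, hr0, hs1⟩ | ⟨hp0, hs0, hqr⟩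
  · -- V = 1, forces S = T = 1
    have ha1 : a = 1 := by linear_combination -W11 + (p + 1) * hp1 + a * r * hq0
    have hb0 : b = 0 := by linear_combination -W12 - b * hp1 + (p + a * s) * hq0
    have hc0 : c = 0 := by linear_combination -W21 + (p + s * a) * hr0 - c * hp1
    have hd1 : d = 1 := by linear_combination W33 + r * d * hqq.symm.trans hq0 + (s + 1) * hs1
    have hx1 : x = 1 := by linear_combination -X11 + (p + 1) * hp1 + x * r * hq0
    have hy0 : y = 0 := by linear_combination -X12 - y * hp1 + (p + x * s) * hq0
    have hz0 : z = 0 := by linear_combination -X21 + (p + s * x) * hr0 - z * hp1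
    have hw1 : w = 1 := by linear_combination X33 + r * w * hq0 + (s + 1) * hs1
    refine Or.inr (Or.inr (Or.inr (Or.inr (Or.inr ⟨?_, ?_, ?_⟩))))
    · rw [Matrix.eta_fin_two S, ← ha, ← hb, ← hc, ← hd, ha1, hb0, hc0, hd1]
      exact Matrix.one_fin_two.symm
    · rw [Matrix.eta_fin_two T, ← hx, ← hy, ← hz, ← hw, hx1, hy0, hz0, hw1]
      exact Matrix.one_fin_two.symm
    · rw [Matrix.eta_fin_two V, ← hpp, ← hqq, ← hrr, ← hss, hp1, hq0, hr0, hs1]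
      exact Matrix.one_fin_two.symm
  · -- V antidiagonal
    have hq0 : q ≠ 0 := left_ne_zero_of_mul_eq_one hqr
    have hrq : q⁻¹ = r := inv_eq_of_mul_eq_one_right hqr
    have hVgoal : V = !![0, q; q⁻¹, 0] := by
      rw [Matrix.eta_fin_two V, ← hpp, ← hqq, ← hrr, ← hss, hp0, hs0, ← hrq]
    by_cases ha0 : a = 0
    · -- family 1
      have hbc : b * c = 1 := by linear_combination sa - a * ha0
      have hbne : b ≠ 0 := left_ne_zero_of_mul_eq_one hbc
      have hd0 : d = 0 := by
        have h2 : b * d = 0 := by linear_combination sb - b * ha0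
        rcases mul_eq_zero.mp h2 with h3 | h3
        · exact absurd h3 hbne
        · exact h3
      have hcb : b⁻¹ = c := inv_eq_of_mul_eq_one_right hbc
      have hwx : w = x := by
        have h2 : b * (x - w) = 0 := by linear_combination t2 + y * ha0 - y * hd0
        rcases mul_eq_zero.mp h2 with h3 | h3
        · exact absurd h3 hbne
        · linear_combination -h3
      have hzy : z = y / b ^ 2 := by
        have h2 : y * c = b * z := by linear_combination t1
        rw [eq_div_iff (pow_ne_zero 2 hbne)]
        linear_combination -b * h2 + y * hbc
      refine Or.inl ⟨b, x, y, q, hbne, hq0, ?_, ?_, ?_, hVgoal⟩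
      · rw [Matrix.isUnit_iff_isUnit_det, Matrix.det_fin_two, isUnit_iff_ne_zero,
          ← hx, ← hy, ← hz, ← hw] at hT
        have heq : x ^ 2 - y ^ 2 / b ^ 2 = x * w - y * z := by
          rw [hwx, hzy]; ring
        rw [heq]; exact hT
      · rw [Matrix.eta_fin_two S, ← ha, ← hb, ← hc, ← hd, ha0, hd0, ← hcb]
      · rw [Matrix.eta_fin_two T, ← hx, ← hy, ← hz, ← hw, hwx, hzy]
    · -- a ≠ 0
      have had : (a + d) * (a - d) = 0 := by linear_combination sa - sd
      rcases mul_eq_zero.mp had with had0 | hadeq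
      · -- d = -a : family 3, T = 1
        have hz0 : z = 0 := by
          have h2 : a * (a * z) = 0 := by linear_combination -E21 + a * z * had0
          rcases mul_eq_zero.mp h2 with h3 | h3
          · exact absurd h3 ha0
          · rcases mul_eq_zero.mp h3 with h4 | h4
            · exact absurd h4 ha0
            · exact h4
        have hy0 : y = 0 := by
          have h2 : a * (a * y) = 0 := by linear_combination -F12 + a * y * had0
          rcases mul_eq_zero.mp h2 with h3 | h3
          · exact absurd h3 ha0
          · rcases mul_eq_zero.mp h3 with h4 | h4
            · exact absurd h4 ha0
            · exact h4
        have hx1 : x = 1 := by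
          have h2 : a * (x - 1) = 0 := by linear_combination E11 - a * b * hz0
          rcases mul_eq_zero.mp h2 with h3 | h3
          · exact absurd h3 ha0
          · linear_combination h3
        have hw1 : w = 1 := by
          have h2 : a * (a * (w - 1)) = 0 := by
            linear_combination -E22 + a * a * hx1 + (a * w - a * x) * had0
          rcases mul_eq_zero.mp h2 with h3 | h3
          · exact absurd h3 ha0
          · rcases mul_eq_zero.mp h3 with h4 | h4
            · exact absurd h4 ha0
            · linear_combination h4
        have hTgoal : T = 1 := by
          rw [Matrix.eta_fin_two T, ← hx, ← hy, ← hz, ← hw, hx1, hy0, hz0, hw1]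
          exact Matrix.one_fin_two.symm
        refine Or.inr (Or.inr (Or.inl ⟨b, c, a, q, ?_, hq0, ?_, hTgoal, hVgoal⟩))
        · linear_combination sa
        · rw [Matrix.eta_fin_two S, ← ha, ← hb, ← hc, ← hd,
            show d = -a by linear_combination had0]
      · -- a = d, a ≠ 0 : S = ±1, T = 1
        have hb0 : b = 0 := by
          have h2 : 2 * a * b = 0 := by linear_combination sb + b * hadeq
          rcases mul_eq_zero.mp h2 with h3 | h3
          · exact absurd (by linear_combination h3 / 2) ha0
          · exact h3
        have hc0 : c = 0 := by
          have h2 : 2 * a * c = 0 := by linear_combination sc + c * hadeq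
          rcases mul_eq_zero.mp h2 with h3 | h3
          · exact absurd (by linear_combination h3 / 2) ha0
          · exact h3
        have hz0 : z = 0 := by
          have h2 : a * (a * z) = 0 := by linear_combination E21 + a * z * hadeq
          rcases mul_eq_zero.mp h2 with h3 | h3
          · exact absurd h3 ha0
          · rcases mul_eq_zero.mp h3 with h4 | h4
            · exact absurd h4 ha0
            · exact h4
        have hx1 : x = 1 := by
          have h2 : a * (x - 1) = 0 := by linear_combination E11 - a * b * hz0
          rcases mul_eq_zero.mp h2 with h3 | h3
          · exact absurd h3 ha0
          · linear_combination h3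
        have hy0 : y = 0 := by
          have h2 : a * y = 0 := by linear_combination E23 + y * hadeq + d * (1 - x) * hb0
          rcases mul_eq_zero.mp h2 with h3 | h3
          · exact absurd h3 ha0
          · exact h3
        have hw1 : w = 1 := by
          have h2 : a * (a * (w - 1)) = 0 := by
            linear_combination E22 + a * w * hadeq + d * a * hx1 - a * hadeq
          rcases mul_eq_zero.mp h2 with h3 | h3
          · exact absurd h3 ha0
          · rcases mul_eq_zero.mp h3 with h4 | h4
            · exact absurd h4 ha0
            · linear_combination h4
        have hTgoal : T = 1 := by
          rw [Matrix.eta_fin_two T, ← hx, ← hy, ← hz, ← hw, hx1, hy0, hz0, hw1]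
          exact Matrix.one_fin_two.symm
        have ha11 : (a - 1) * (a + 1) = 0 := by linear_combination sa - c * hb0
        rcases mul_eq_zero.mp ha11 with h | h
        · refine Or.inr (Or.inr (Or.inr (Or.inr (Or.inl ⟨q, hq0, ?_, hTgoal, hVgoal⟩))))
          rw [Matrix.eta_fin_two S, ← ha, ← hb, ← hc, ← hd, hb0, hc0,
            show a = 1 by linear_combination h, show d = 1 by linear_combination h - hadeq]
          exact Matrix.one_fin_two.symm
        · refine Or.inr (Or.inr (Or.inr (Or.inl ⟨q, hq0, ?_, hTgoal, hVgoal⟩)))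
          rw [Matrix.eta_fin_two S, ← ha, ← hb, ← hc, ← hd, hb0, hc0,
            show a = -1 by linear_combination h, show d = -1 by linear_combination h - hadeq]
end

section
/- (Lemma 6.3: detour relations follow from the reduced presentation.) In the reduced presentation setup (see context) with n ≥ 4, the elements s_i and τ_i (1 ≤ i ≤ n−1) satisfy ν_i s_j ν_i = ν_j s_i ν_j and ν_i τ_j ν_i = ν_j τ_i ν_j for all 1 ≤ i, j ≤ n−1 with |i−j| = 1. -/
/-- The ascending product `ν_a ν_{a+1} ⋯ ν_b` (equal to `1` if `b < a`). -/
def ascProd {G : Type*} [Monoid G] (ν : ℕ → G) (a b : ℕ) : G :=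
  ((List.range' a (b + 1 - a)).map ν).prod

/-- The descending product `ν_a ν_{a-1} ⋯ ν_b` (equal to `1` if `a < b`). -/
def descProd {G : Type*} [Monoid G] (ν : ℕ → G) (a b : ℕ) : G :=
  ((List.range' b (a + 1 - b)).reverse.map ν).prod

/-- `sgen ν s1 k` is the element `s_k` of the reduced presentation:
`s_1 = s1` and `s_k = (ν_{k-1} ⋯ ν_1)(ν_k ⋯ ν_2) s1 (ν_2 ⋯ ν_k)(ν_1 ⋯ ν_{k-1})`
for `k ≥ 2`. -/
def sgen {G : Type*} [Monoid G] (ν : ℕ → G) (s1 : G) (k : ℕ) : G :=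
  descProd ν (k - 1) 1 * descProd ν k 2 * s1 * ascProd ν 2 k * ascProd ν 1 (k - 1)

/-- `tgen ν t1 k` is the element `τ_k` of the reduced presentation, defined as for
`sgen` with `τ₁ = t1` in place of `s₁`. -/
def tgen {G : Type*} [Monoid G] (ν : ℕ → G) (t1 : G) (k : ℕ) : G :=
  descProd ν (k - 1) 1 * descProd ν k 2 * t1 * ascProd ν 2 k * ascProd ν 1 (k - 1)

lemma descProd_step {G : Type*} [Monoid G] (ν : ℕ → G) (a b : ℕ) (h : b ≤ a + 1) :
    descProd ν (a + 1) b = ν (a + 1) * descProd ν a b := by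
  unfold descProd
  have h1 : a + 1 + 1 - b = (a + 1 - b) + 1 := by omega
  have h2 : b + 1 * (a + 1 - b) = a + 1 := by omega
  rw [h1, List.range'_concat, h2]
  simp

lemma ascProd_step {G : Type*} [Monoid G] (ν : ℕ → G) (a b : ℕ) (h : a ≤ b + 1) :
    ascProd ν a (b + 1) = ascProd ν a b * ν (b + 1) := by
  unfold ascProd
  have h1 : b + 1 + 1 - a = (b + 1 - a) + 1 := by omega
  have h2 : a + 1 * (b + 1 - a) = b + 1 := by omega
  rw [h1, List.range'_concat, h2]
  simp

lemma commute_descProd {G : Type*} [Monoid G] (ν : ℕ → G) (x : G) (a b : ℕ)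
    (h : ∀ l, b ≤ l → l ≤ a → Commute x (ν l)) : Commute x (descProd ν a b) := by
  apply Commute.list_prod_right
  intro y hy
  simp only [List.mem_map, List.mem_reverse, List.mem_range'_1] at hy
  obtain ⟨l, ⟨hl1, hl2⟩, rfl⟩ := hy
  exact h l hl1 (by omega)

lemma commute_ascProd {G : Type*} [Monoid G] (ν : ℕ → G) (x : G) (a b : ℕ)
    (h : ∀ l, a ≤ l → l ≤ b → Commute x (ν l)) : Commute x (ascProd ν a b) := by
  apply Commute.list_prod_right
  intro y hy
  simp only [List.mem_map, List.mem_range'_1] at hy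
  obtain ⟨l, ⟨hl1, hl2⟩, rfl⟩ := hy
  exact h l hl1 (by omega)

lemma detour_key {G : Type*} [Group G] (ν : ℕ → G) (x : G) (m : ℕ)
    (hinv : ν (m + 1) * ν (m + 1) = 1)
    (hcomm : ∀ l, 1 ≤ l → l ≤ m → ν (m + 2) * ν l = ν l * ν (m + 2)) :
    ν (m + 1) * sgen ν x (m + 2) * ν (m + 1)
      = ν (m + 2) * sgen ν x (m + 1) * ν (m + 2) := by
  have c1 : ν (m + 2) * descProd ν m 1 = descProd ν m 1 * ν (m + 2) :=
    (commute_descProd ν (ν (m + 2)) m 1 fun l hl1 hl2 => hcomm l hl1 hl2).eq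
  have c2 : ν (m + 2) * ascProd ν 1 m = ascProd ν 1 m * ν (m + 2) :=
    (commute_ascProd ν (ν (m + 2)) 1 m fun l hl1 hl2 => hcomm l hl1 hl2).eq
  have e1 : descProd ν (m + 1) 1 = ν (m + 1) * descProd ν m 1 :=
    descProd_step ν m 1 (by omega)
  have e2 : descProd ν (m + 2) 2 = ν (m + 2) * descProd ν (m + 1) 2 :=
    descProd_step ν (m + 1) 2 (by omega)
  have e3 : ascProd ν 1 (m + 1) = ascProd ν 1 m * ν (m + 1) :=
    ascProd_step ν 1 m (by omega)
  have e4 : ascProd ν 2 (m + 2) = ascProd ν 2 (m + 1) * ν (m + 2) :=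
    ascProd_step ν 2 (m + 1) (by omega)
  show ν (m + 1) * (descProd ν (m + 2 - 1) 1 * descProd ν (m + 2) 2 * x *
      ascProd ν 2 (m + 2) * ascProd ν 1 (m + 2 - 1)) * ν (m + 1)
    = ν (m + 2) * (descProd ν (m + 1 - 1) 1 * descProd ν (m + 1) 2 * x *
      ascProd ν 2 (m + 1) * ascProd ν 1 (m + 1 - 1)) * ν (m + 2)
  have hm1 : m + 2 - 1 = m + 1 := by omega
  have hm2 : m + 1 - 1 = m := by omega
  rw [hm1, hm2, e1, e2, e3, e4]
  simp only [mul_assoc]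
  rw [hinv, mul_one, ← mul_assoc, hinv, one_mul]
  rw [c2]
  conv_rhs => rw [← mul_assoc, c1, mul_assoc]

/-- (Lemma 6.3.) The detour relations `ν_i s_j ν_i = ν_j s_i ν_j` and
`ν_i τ_j ν_i = ν_j τ_i ν_j` for `|i - j| = 1` follow from the reduced presentation. -/
theorem detour_relations {G : Type*} [Group G] (n : ℕ) (hn : 4 ≤ n)
    (s1 t1 : G) (ν : ℕ → G)
    (hν2 : ∀ i, 1 ≤ i → i ≤ n - 1 → ν i * ν i = 1)
    (hs2 : s1 * s1 = 1)
    (hbraid : ∀ i j, 1 ≤ i → i ≤ n - 1 → 1 ≤ j → j ≤ n - 1 →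
      (i + 1 = j ∨ j + 1 = i) → ν i * ν j * ν i = ν j * ν i * ν j)
    (hfar : ∀ i j, 1 ≤ i → i ≤ n - 1 → 1 ≤ j → j ≤ n - 1 →
      (i + 2 ≤ j ∨ j + 2 ≤ i) → ν i * ν j = ν j * ν i)
    (hst : s1 * t1 = t1 * s1)
    (htν : ∀ i, 3 ≤ i → i ≤ n - 1 → t1 * ν i = ν i * t1)
    (hsν : ∀ i, 3 ≤ i → i ≤ n - 1 → s1 * ν i = ν i * s1)
    (hr41 : t1 * (ν 1 * ν 2 * s1 * ν 2 * ν 1) * s1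
      = (ν 1 * ν 2 * s1 * ν 2 * ν 1) * s1 * (ν 1 * ν 2 * t1 * ν 2 * ν 1))
    (hr42 : s1 * (ν 2 * ν 3 * ν 1 * ν 2 * s1 * ν 2 * ν 1 * ν 3 * ν 2)
      = (ν 2 * ν 3 * ν 1 * ν 2 * s1 * ν 2 * ν 1 * ν 3 * ν 2) * s1)
    (hr43 : t1 * (ν 2 * ν 3 * ν 1 * ν 2 * s1 * ν 2 * ν 1 * ν 3 * ν 2)
      = (ν 2 * ν 3 * ν 1 * ν 2 * s1 * ν 2 * ν 1 * ν 3 * ν 2) * t1)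
    (hr44 : t1 * (ν 2 * ν 3 * ν 1 * ν 2 * t1 * ν 2 * ν 1 * ν 3 * ν 2)
      = (ν 2 * ν 3 * ν 1 * ν 2 * t1 * ν 2 * ν 1 * ν 3 * ν 2) * t1)
    : ∀ i j, 1 ≤ i → i ≤ n - 1 → 1 ≤ j → j ≤ n - 1 → (i + 1 = j ∨ j + 1 = i) →
      ν i * sgen ν s1 j * ν i = ν j * sgen ν s1 i * ν j ∧
      ν i * tgen ν t1 j * ν i = ν j * tgen ν t1 i * ν j := by
  have key : ∀ m : ℕ, m + 2 ≤ n - 1 → ∀ x : G,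
      ν (m + 1) * sgen ν x (m + 2) * ν (m + 1)
        = ν (m + 2) * sgen ν x (m + 1) * ν (m + 2) := by
    intro m hm x
    exact detour_key ν x m (hν2 (m + 1) (by omega) (by omega))
      (fun l hl1 hl2 => hfar (m + 2) l (by omega) (by omega) hl1 (by omega)
        (Or.inr (by omega)))
  have htgen : ∀ (y : G) (k : ℕ), tgen ν y k = sgen ν y k := fun _ _ => rfl
  intro i j hi1 hin hj1 hjn hadj
  rcases hadj with hij | hij
  · obtain ⟨m, rfl⟩ : ∃ m, i = m + 1 := ⟨i - 1, by omega⟩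
    subst hij
    exact ⟨key m (by omega) s1, by rw [htgen, htgen]; exact key m (by omega) t1⟩
  · obtain ⟨m, rfl⟩ : ∃ m, j = m + 1 := ⟨j - 1, by omega⟩
    subst hij
    exact ⟨(key m (by omega) s1).symm, by
      rw [htgen, htgen]; exact (key m (by omega) t1).symm⟩
end

section
/- (Lemma 6.4: commuting of s_i and τ_i, and involutivity of s_i, from the reduced presentation.) In the reduced presentation setup (see context) with n ≥ 4, the elements s_i and τ_i satisfy τ_i s_i = s_i τ_i and s_i² = 1 for all 1 ≤ i ≤ n−1. -/
lemma descProd_eq_inv_ascProd {G : Type*} [Group G] {ν : ℕ → G} {a b : ℕ}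
    (hν : ∀ j, a ≤ j → j ≤ b → ν j * ν j = 1) :
    descProd ν b a = (ascProd ν a b)⁻¹ := by
  rw [descProd, ascProd, List.prod_inv_reverse, List.map_reverse, List.map_map]
  congr 2
  refine List.map_congr_left fun j hj => ?_
  rw [List.mem_range'_1] at hj
  exact (inv_eq_of_mul_eq_one_right (hν j hj.1 (by omega))).symm

lemma sgen_eq_conj {G : Type*} [Group G] {ν : ℕ → G} (x : G) {k : ℕ}
    (hν : ∀ j, 1 ≤ j → j ≤ k → ν j * ν j = 1) :
    sgen ν x k =
      descProd ν (k - 1) 1 * descProd ν k 2 * x * (descProd ν (k - 1) 1 * descProd ν k 2)⁻¹ := by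
  rw [sgen, descProd_eq_inv_ascProd (a := 2) (b := k) fun j hj => hν j (by omega),
    descProd_eq_inv_ascProd (a := 1) (b := k - 1) fun j hj hj' => hν j hj (by omega)]
  group

lemma tgen_eq_sgen {G : Type*} [Monoid G] (ν : ℕ → G) (x : G) (k : ℕ) :
    tgen ν x k = sgen ν x k :=
  rfl

theorem tau_s_commute_and_involution_general {G : Type*} [Group G] (n : ℕ)
    (s1 t1 : G) (ν : ℕ → G)
    (hν2 : ∀ i, 1 ≤ i → i ≤ n - 1 → ν i * ν i = 1)
    (hs2 : s1 * s1 = 1)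
    (hst : s1 * t1 = t1 * s1)
    : ∀ i, 1 ≤ i → i ≤ n - 1 →
      tgen ν t1 i * sgen ν s1 i = sgen ν s1 i * tgen ν t1 i ∧
      sgen ν s1 i * sgen ν s1 i = 1 := by
  intro i _ hi
  have hν : ∀ j, 1 ≤ j → j ≤ i → ν j * ν j = 1 := fun j hj1 hj => hν2 j hj1 (hj.trans hi)
  rw [tgen_eq_sgen, sgen_eq_conj t1 hν, sgen_eq_conj s1 hν, conj_mul, conj_mul, conj_mul, hst, hs2,
    mul_one, mul_inv_cancel]
  exact ⟨rfl, rfl⟩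

/-- (Lemma 6.4.) The relations `τ_i s_i = s_i τ_i` and `s_i² = 1` for all `i` follow
from the reduced presentation. -/
theorem tau_s_commute_and_involution {G : Type*} [Group G] (n : ℕ) (hn : 4 ≤ n)
    (s1 t1 : G) (ν : ℕ → G)
    (hν2 : ∀ i, 1 ≤ i → i ≤ n - 1 → ν i * ν i = 1)
    (hs2 : s1 * s1 = 1)
    (hbraid : ∀ i j, 1 ≤ i → i ≤ n - 1 → 1 ≤ j → j ≤ n - 1 →
      (i + 1 = j ∨ j + 1 = i) → ν i * ν j * ν i = ν j * ν i * ν j)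
    (hfar : ∀ i j, 1 ≤ i → i ≤ n - 1 → 1 ≤ j → j ≤ n - 1 →
      (i + 2 ≤ j ∨ j + 2 ≤ i) → ν i * ν j = ν j * ν i)
    (hst : s1 * t1 = t1 * s1)
    (htν : ∀ i, 3 ≤ i → i ≤ n - 1 → t1 * ν i = ν i * t1)
    (hsν : ∀ i, 3 ≤ i → i ≤ n - 1 → s1 * ν i = ν i * s1)
    (hr41 : t1 * (ν 1 * ν 2 * s1 * ν 2 * ν 1) * s1
      = (ν 1 * ν 2 * s1 * ν 2 * ν 1) * s1 * (ν 1 * ν 2 * t1 * ν 2 * ν 1))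
    (hr42 : s1 * (ν 2 * ν 3 * ν 1 * ν 2 * s1 * ν 2 * ν 1 * ν 3 * ν 2)
      = (ν 2 * ν 3 * ν 1 * ν 2 * s1 * ν 2 * ν 1 * ν 3 * ν 2) * s1)
    (hr43 : t1 * (ν 2 * ν 3 * ν 1 * ν 2 * s1 * ν 2 * ν 1 * ν 3 * ν 2)
      = (ν 2 * ν 3 * ν 1 * ν 2 * s1 * ν 2 * ν 1 * ν 3 * ν 2) * t1)
    (hr44 : t1 * (ν 2 * ν 3 * ν 1 * ν 2 * t1 * ν 2 * ν 1 * ν 3 * ν 2)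
      = (ν 2 * ν 3 * ν 1 * ν 2 * t1 * ν 2 * ν 1 * ν 3 * ν 2) * t1)
    : ∀ i, 1 ≤ i → i ≤ n - 1 →
      tgen ν t1 i * sgen ν s1 i = sgen ν s1 i * tgen ν t1 i ∧
      sgen ν s1 i * sgen ν s1 i = 1 :=
  tau_s_commute_and_involution_general n s1 t1 ν hν2 hs2 hst
end

section
/- (Lemma 6.5: far-commutation relations follow from the reduced presentation.) In the reduced presentation setup (see context) with n ≥ 4, for all 1 ≤ i, j ≤ n−1 with |i−j| ≥ 2 the following hold: s_i ν_j = ν_j s_i, τ_i ν_j = ν_j τ_i, s_i s_j = s_j s_i, τ_i τ_j = τ_j τ_i, and s_i τ_j = τ_j s_i. -/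
section Aux
variable {G : Type*} [Group G]


lemma prod_comm_list (x : G) : ∀ (L : List G), (∀ y ∈ L, x * y = y * x) →
    x * L.prod = L.prod * x := by
  intro L
  induction L with
  | nil => simp
  | cons a L ih =>
    intro h
    simp only [List.prod_cons, ← mul_assoc, h a (by simp)]
    rw [mul_assoc, ih (fun y hy => h y (by simp [hy])), ← mul_assoc]

lemma descProd_succ (ν : ℕ → G) (m b : ℕ) (h : b ≤ m + 1) :
    descProd ν (m + 1) b = ν (m + 1) * descProd ν m b := by
  unfold descProd
  have h1 : m + 1 + 1 - b = (m + 1 - b) + 1 := by omega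
  rw [h1, List.range'_concat, List.reverse_append]
  have h2 : b + (m + 1 - b) = m + 1 := by omega
  simp [h2]

lemma ascProd_succ (ν : ℕ → G) (a m : ℕ) (h : a ≤ m + 1) :
    ascProd ν a (m + 1) = ascProd ν a m * ν (m + 1) := by
  unfold ascProd
  have h1 : m + 1 + 1 - a = (m + 1 - a) + 1 := by omega
  rw [h1, List.range'_concat]
  have h2 : a + (m + 1 - a) = m + 1 := by omega
  simp [h2]

lemma sgen_one (ν : ℕ → G) (a : G) : sgen ν a 1 = a := by
  simp [sgen, descProd, ascProd]

-- word helpers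
lemma swap' {a c : G} (h : a * c = c * a) (x : G) : a * (c * x) = c * (a * x) := by
  rw [← mul_assoc, h, mul_assoc]

lemma braid' {a b : G} (h : a * b * a = b * a * b) (x : G) :
    a * (b * (a * x)) = b * (a * (b * x)) := by
  rw [← mul_assoc, ← mul_assoc, h, mul_assoc, mul_assoc]

lemma invol' {a : G} (h : a * a = 1) (x : G) : a * (a * x) = x := by
  rw [← mul_assoc, h, one_mul]

-- commutation of ν j with descProd/ascProd when far
lemma nu_descProd_comm (ν : ℕ → G) {j a b : ℕ}
    (hc : ∀ m, b ≤ m → m ≤ a → ν j * ν m = ν m * ν j) :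
    ν j * descProd ν a b = descProd ν a b * ν j := by
  apply prod_comm_list
  intro y hy
  simp only [List.mem_map, List.mem_reverse, List.mem_range'_1] at hy
  obtain ⟨m, ⟨h1, h2⟩, rfl⟩ := hy
  exact hc m h1 (by omega)

lemma nu_ascProd_comm (ν : ℕ → G) {j a b : ℕ}
    (hc : ∀ m, a ≤ m → m ≤ b → ν j * ν m = ν m * ν j) :
    ν j * ascProd ν a b = ascProd ν a b * ν j := by
  apply prod_comm_list
  intro y hy
  simp only [List.mem_map, List.mem_range'_1] at hy
  obtain ⟨m, ⟨h1, h2⟩, rfl⟩ := hy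
  exact hc m h1 (by omega)

lemma sgen_succ (n : ℕ) (ν : ℕ → G)
    (hfar : ∀ i j, 1 ≤ i → i ≤ n - 1 → 1 ≤ j → j ≤ n - 1 →
      (i + 2 ≤ j ∨ j + 2 ≤ i) → ν i * ν j = ν j * ν i)
    (a : G) (k : ℕ) (hk : 1 ≤ k) (hk' : k + 1 ≤ n - 1) :
    sgen ν a (k + 1) = ν k * ν (k + 1) * sgen ν a k * ν (k + 1) * ν k := by
  obtain ⟨m, rfl⟩ : ∃ m, k = m + 1 := ⟨k - 1, by omega⟩
  show descProd ν (m+1) 1 * descProd ν (m+2) 2 * a * ascProd ν 2 (m+2) * ascProd ν 1 (m+1) = _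
  have e1 : descProd ν (m+1) 1 = ν (m+1) * descProd ν m 1 := descProd_succ ν m 1 (by omega)
  have e2 : descProd ν (m+2) 2 = ν (m+2) * descProd ν (m+1) 2 := descProd_succ ν (m+1) 2 (by omega)
  have e3 : ascProd ν 2 (m+2) = ascProd ν 2 (m+1) * ν (m+2) := ascProd_succ ν 2 (m+1) (by omega)
  have e4 : ascProd ν 1 (m+1) = ascProd ν 1 m * ν (m+1) := ascProd_succ ν 1 m (by omega)
  have hc1 : ν (m+2) * descProd ν m 1 = descProd ν m 1 * ν (m+2) := by
    apply nu_descProd_comm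
    intro p hp1 hp2
    exact hfar (m+2) p (by omega) (by omega) hp1 (by omega) (by omega)
  have hc2 : ν (m+2) * ascProd ν 1 m = ascProd ν 1 m * ν (m+2) := by
    apply nu_ascProd_comm
    intro p hp1 hp2
    exact hfar (m+2) p (by omega) (by omega) hp1 (by omega) (by omega)
  rw [e1, e2, e3, e4]
  show _ = ν (m+1) * ν (m+2) * (descProd ν m 1 * descProd ν (m+1) 2 * a * ascProd ν 2 (m+1) * ascProd ν 1 m) * ν (m+2) * ν (m+1)
  simp only [mul_assoc]
  rw [swap' hc1.symm, swap' hc2]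

lemma nu_comm (n : ℕ) (hn : 4 ≤ n) (ν : ℕ → G)
    (hν2 : ∀ i, 1 ≤ i → i ≤ n - 1 → ν i * ν i = 1)
    (hbraid : ∀ i j, 1 ≤ i → i ≤ n - 1 → 1 ≤ j → j ≤ n - 1 →
      (i + 1 = j ∨ j + 1 = i) → ν i * ν j * ν i = ν j * ν i * ν j)
    (hfar : ∀ i j, 1 ≤ i → i ≤ n - 1 → 1 ≤ j → j ≤ n - 1 →
      (i + 2 ≤ j ∨ j + 2 ≤ i) → ν i * ν j = ν j * ν i)
    (a : G) (ha : ∀ m, 3 ≤ m → m ≤ n - 1 → a * ν m = ν m * a) :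
    ∀ k, 1 ≤ k → k ≤ n - 1 → ∀ j, 1 ≤ j → j ≤ n - 1 → (k + 2 ≤ j ∨ j + 2 ≤ k) →
    sgen ν a k * ν j = ν j * sgen ν a k := by
  intro k
  induction k using Nat.strong_induction_on with
  | _ k ih =>
  intro hk1 hk2 j hj1 hj2 hjk
  rcases Nat.lt_or_ge k 3 with hk3 | hk3
  · -- k = 1 or k = 2
    interval_cases k
    · rw [sgen_one]
      rcases hjk with h | h
      · exact ha j (by omega) hj2
      · omega
    · rcases hjk with h | h
      · rw [show (2:ℕ) = 1 + 1 from rfl, sgen_succ n ν hfar a 1 le_rfl (by omega), sgen_one]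
        have c1 : Commute (ν j) (ν 1) := hfar j 1 hj1 hj2 (by omega) (by omega) (by omega)
        have c2 : Commute (ν j) (ν 2) := hfar j 2 hj1 hj2 (by omega) (by omega) (by omega)
        have c3 : Commute (ν j) a := (ha j (by omega) hj2).symm
        exact ((((c1.mul_right c2).mul_right c3).mul_right c2).mul_right c1).symm.eq
      · omega
  · obtain ⟨m, rfl⟩ : ∃ m, k = m + 3 := ⟨k - 3, by omega⟩
    have e1 : sgen ν a (m+3) = ν (m+2) * ν (m+3) * sgen ν a (m+2) * ν (m+3) * ν (m+2) :=
      sgen_succ n ν hfar a (m+2) (by omega) (by omega)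
    rcases Nat.lt_or_ge j (m+1) with hjm | hjm
    · -- j ≤ m, far below
      rw [e1]
      have c1 : Commute (ν j) (ν (m+2)) := hfar j (m+2) hj1 hj2 (by omega) (by omega) (by omega)
      have c2 : Commute (ν j) (ν (m+3)) := hfar j (m+3) hj1 hj2 (by omega) (by omega) (by omega)
      have c3 : Commute (ν j) (sgen ν a (m+2)) :=
        (ih (m+2) (by omega) (by omega) (by omega) j hj1 hj2 (by omega)).symm
      exact ((((c1.mul_right c2).mul_right c3).mul_right c2).mul_right c1).symm.eq
    · rcases Nat.lt_or_ge (m+4) j with hjm' | hjm'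
      · -- j ≥ m+5, far above
        rw [e1]
        have c1 : Commute (ν j) (ν (m+2)) := hfar j (m+2) hj1 hj2 (by omega) (by omega) (by omega)
        have c2 : Commute (ν j) (ν (m+3)) := hfar j (m+3) hj1 hj2 (by omega) (by omega) (by omega)
        have c3 : Commute (ν j) (sgen ν a (m+2)) :=
          (ih (m+2) (by omega) (by omega) (by omega) j hj1 hj2 (by omega)).symm
        exact ((((c1.mul_right c2).mul_right c3).mul_right c2).mul_right c1).symm.eq
      · -- j = m+1 (only possibility left)
        have hjeq : j = m + 1 := by omega
        subst hjeq
        have e2 : sgen ν a (m+2) = ν (m+1) * ν (m+2) * sgen ν a (m+1) * ν (m+2) * ν (m+1) :=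
          sgen_succ n ν hfar a (m+1) (by omega) (by omega)
        set A := ν (m+1) with hA
        set B := ν (m+2) with hB
        set C := ν (m+3) with hC
        set X := sgen ν a (m+1) with hX
        have hab : A * B * A = B * A * B :=
          hbraid (m+1) (m+2) (by omega) (by omega) (by omega) (by omega) (by omega)
        have hbc : B * C * B = C * B * C :=
          hbraid (m+2) (m+3) (by omega) (by omega) (by omega) (by omega) (by omega)
        have hac : A * C = C * A :=
          hfar (m+1) (m+3) (by omega) (by omega) (by omega) (by omega) (by omega)
        have hcX : C * X = X * C :=
          (ih (m+1) (by omega) (by omega) (by omega) (m+3) (by omega) (by omega) (by omega)).symm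
        have hW : ∀ x : G, A * (B * (C * (A * (B * x)))) = B * (C * (A * (B * (C * x)))) := by
          intro x
          rw [swap' hac.symm (B * x), braid' hab (C * (B * x)),
              swap' hac.symm (B * (C * x)), ← braid' hbc.symm x]
        have hW' : C * (B * (A * (C * B))) = B * (A * (C * (B * A))) := by
          rw [swap' hac B, braid' hbc.symm (A * B),
              show B * (A * B) = A * (B * A) by rw [← mul_assoc, ← mul_assoc, hab],
              swap' hac.symm (B * A)]
        rw [e1, e2]
        simp only [mul_assoc]
        rw [hW (X * (B * (A * (C * B)))), swap' hcX (B * (A * (C * B))), hW']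

lemma pair_comm (n : ℕ) (hn : 4 ≤ n) (ν : ℕ → G)
    (hν2 : ∀ i, 1 ≤ i → i ≤ n - 1 → ν i * ν i = 1)
    (hbraid : ∀ i j, 1 ≤ i → i ≤ n - 1 → 1 ≤ j → j ≤ n - 1 →
      (i + 1 = j ∨ j + 1 = i) → ν i * ν j * ν i = ν j * ν i * ν j)
    (hfar : ∀ i j, 1 ≤ i → i ≤ n - 1 → 1 ≤ j → j ≤ n - 1 →
      (i + 2 ≤ j ∨ j + 2 ≤ i) → ν i * ν j = ν j * ν i)
    (a b : G)
    (haν : ∀ m, 3 ≤ m → m ≤ n - 1 → a * ν m = ν m * a)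
    (hbν : ∀ m, 3 ≤ m → m ≤ n - 1 → b * ν m = ν m * b)
    (hbase : a * sgen ν b 3 = sgen ν b 3 * a) :
    ∀ i, 1 ≤ i → ∀ j, i + 2 ≤ j → j ≤ n - 1 →
      sgen ν a i * sgen ν b j = sgen ν b j * sgen ν a i := by
  have base1 : ∀ j, 3 ≤ j → j ≤ n - 1 → a * sgen ν b j = sgen ν b j * a := by
    intro j hj
    induction j, hj using Nat.le_induction with
    | base => intro _; exact hbase
    | succ j hj ihj =>
      intro hj2
      rw [sgen_succ n ν hfar b j (by omega) (by omega)]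
      have c1 : Commute a (ν j) := haν j (by omega) (by omega)
      have c2 : Commute a (ν (j+1)) := haν (j+1) (by omega) (by omega)
      have c3 : Commute a (sgen ν b j) := ihj (by omega)
      exact (((c1.mul_right c2).mul_right c3).mul_right c2).mul_right c1
  intro i hi
  induction i, hi using Nat.le_induction with
  | base =>
    intro j hj hj2
    rw [sgen_one]
    exact base1 j (by omega) hj2
  | succ i hi ihi =>
    intro j hj hj2
    rw [sgen_succ n ν hfar a i (by omega) (by omega)]
    have c1 : Commute (sgen ν b j) (ν i) :=
      nu_comm n hn ν hν2 hbraid hfar b hbν j (by omega) hj2 i (by omega) (by omega) (by omega)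
    have c2 : Commute (sgen ν b j) (ν (i+1)) :=
      nu_comm n hn ν hν2 hbraid hfar b hbν j (by omega) hj2 (i+1) (by omega) (by omega) (by omega)
    have c3 : Commute (sgen ν b j) (sgen ν a i) := (ihi j (by omega) hj2).symm
    exact ((((c1.mul_right c2).mul_right c3).mul_right c2).mul_right c1).symm.eq

lemma conj_swap {u v w : G} (hw : w * w = 1)
    (h : u * (w * v * w) = w * v * w * u) : v * (w * u * w) = w * u * w * v := by
  have key := congrArg (fun x => w * x * w) h
  simp only [mul_assoc] at key
  rw [invol' hw (v * (w * (u * w)))] at key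
  rw [hw, mul_one] at key
  simp only [mul_assoc]
  exact key.symm

lemma sgen_three (ν : ℕ → G) (a : G) :
    sgen ν a 3 = ν 2 * ν 1 * ν 3 * ν 2 * a * (ν 2 * ν 3 * ν 1 * ν 2) := by
  show descProd ν 2 1 * descProd ν 3 2 * a * ascProd ν 2 3 * ascProd ν 1 2 = _
  rw [show (2:ℕ) = 1 + 1 from rfl, show (3:ℕ) = 2+1 from rfl]
  rw [descProd_succ, descProd_succ, ascProd_succ, ascProd_succ] <;> try omega
  simp [descProd, ascProd, List.range']
  group

end Aux

/-- (Lemma 6.5.) The far-commutation relations `s_i ν_j = ν_j s_i`,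
`τ_i ν_j = ν_j τ_i`, `s_i s_j = s_j s_i`, `τ_i τ_j = τ_j τ_i` and
`s_i τ_j = τ_j s_i` for `|i - j| ≥ 2` follow from the reduced presentation. -/
theorem far_commutation_relations {G : Type*} [Group G] (n : ℕ) (hn : 4 ≤ n)
    (s1 t1 : G) (ν : ℕ → G)
    (hν2 : ∀ i, 1 ≤ i → i ≤ n - 1 → ν i * ν i = 1)
    (hs2 : s1 * s1 = 1)
    (hbraid : ∀ i j, 1 ≤ i → i ≤ n - 1 → 1 ≤ j → j ≤ n - 1 →
      (i + 1 = j ∨ j + 1 = i) → ν i * ν j * ν i = ν j * ν i * ν j)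
    (hfar : ∀ i j, 1 ≤ i → i ≤ n - 1 → 1 ≤ j → j ≤ n - 1 →
      (i + 2 ≤ j ∨ j + 2 ≤ i) → ν i * ν j = ν j * ν i)
    (hst : s1 * t1 = t1 * s1)
    (htν : ∀ i, 3 ≤ i → i ≤ n - 1 → t1 * ν i = ν i * t1)
    (hsν : ∀ i, 3 ≤ i → i ≤ n - 1 → s1 * ν i = ν i * s1)
    (hr41 : t1 * (ν 1 * ν 2 * s1 * ν 2 * ν 1) * s1
      = (ν 1 * ν 2 * s1 * ν 2 * ν 1) * s1 * (ν 1 * ν 2 * t1 * ν 2 * ν 1))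
    (hr42 : s1 * (ν 2 * ν 3 * ν 1 * ν 2 * s1 * ν 2 * ν 1 * ν 3 * ν 2)
      = (ν 2 * ν 3 * ν 1 * ν 2 * s1 * ν 2 * ν 1 * ν 3 * ν 2) * s1)
    (hr43 : t1 * (ν 2 * ν 3 * ν 1 * ν 2 * s1 * ν 2 * ν 1 * ν 3 * ν 2)
      = (ν 2 * ν 3 * ν 1 * ν 2 * s1 * ν 2 * ν 1 * ν 3 * ν 2) * t1)
    (hr44 : t1 * (ν 2 * ν 3 * ν 1 * ν 2 * t1 * ν 2 * ν 1 * ν 3 * ν 2)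
      = (ν 2 * ν 3 * ν 1 * ν 2 * t1 * ν 2 * ν 1 * ν 3 * ν 2) * t1)
    : ∀ i j, 1 ≤ i → i ≤ n - 1 → 1 ≤ j → j ≤ n - 1 → (i + 2 ≤ j ∨ j + 2 ≤ i) →
      sgen ν s1 i * ν j = ν j * sgen ν s1 i ∧
      tgen ν t1 i * ν j = ν j * tgen ν t1 i ∧
      sgen ν s1 i * sgen ν s1 j = sgen ν s1 j * sgen ν s1 i ∧
      tgen ν t1 i * tgen ν t1 j = tgen ν t1 j * tgen ν t1 i ∧
      sgen ν s1 i * tgen ν t1 j = tgen ν t1 j * sgen ν s1 i := by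
  have h3n : 3 ≤ n - 1 := by omega
  have h13 : ν 1 * ν 3 = ν 3 * ν 1 := hfar 1 3 (by omega) (by omega) (by omega) h3n (by omega)
  have hword : ∀ y : G, ν 2 * ν 3 * ν 1 * ν 2 * y * ν 2 * ν 1 * ν 3 * ν 2
      = ν 2 * ν 3 * ν 1 * ν 2 * y * (ν 2 * ν 3 * ν 1 * ν 2) := by
    intro y
    simp only [mul_assoc]
    rw [swap' h13 (ν 2)]
  have sgen3w : ∀ x : G, sgen ν x 3 = ν 2 * ν 3 * ν 1 * ν 2 * x * (ν 2 * ν 3 * ν 1 * ν 2) := by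
    intro x
    rw [sgen_three]
    simp only [mul_assoc]
    rw [swap' h13 (ν 2 * (x * (ν 2 * (ν 3 * (ν 1 * ν 2)))))]
  have hw2 : (ν 2 * ν 3 * ν 1 * ν 2) * (ν 2 * ν 3 * ν 1 * ν 2) = 1 := by
    simp only [mul_assoc]
    rw [invol' (hν2 2 (by omega) (by omega)) (ν 3 * (ν 1 * ν 2)),
        swap' h13 (ν 1 * ν 2),
        invol' (hν2 3 (by omega) h3n) (ν 1 * (ν 1 * ν 2)),
        invol' (hν2 1 (by omega) (by omega)) (ν 2),
        hν2 2 (by omega) (by omega)]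
  rw [hword s1] at hr42 hr43
  rw [hword t1] at hr44
  have hbase_ss : s1 * sgen ν s1 3 = sgen ν s1 3 * s1 := by rw [sgen3w]; exact hr42
  have hbase_ts : t1 * sgen ν s1 3 = sgen ν s1 3 * t1 := by rw [sgen3w]; exact hr43
  have hbase_tt : t1 * sgen ν t1 3 = sgen ν t1 3 * t1 := by rw [sgen3w]; exact hr44
  have hbase_st : s1 * sgen ν t1 3 = sgen ν t1 3 * s1 := by
    rw [sgen3w]
    exact conj_swap hw2 hr43
  have tgen_eq : ∀ (x : G) (k : ℕ), tgen ν x k = sgen ν x k := fun _ _ => rfl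
  intro i j hi1 hi2 hj1 hj2 hij
  refine ⟨nu_comm n hn ν hν2 hbraid hfar s1 hsν i hi1 hi2 j hj1 hj2 hij, ?_, ?_, ?_, ?_⟩
  · rw [tgen_eq]
    exact nu_comm n hn ν hν2 hbraid hfar t1 htν i hi1 hi2 j hj1 hj2 hij
  · rcases hij with h | h
    · exact pair_comm n hn ν hν2 hbraid hfar s1 s1 hsν hsν hbase_ss i hi1 j h hj2
    · exact (pair_comm n hn ν hν2 hbraid hfar s1 s1 hsν hsν hbase_ss j hj1 i h hi2).symm
  · rw [tgen_eq, tgen_eq]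
    rcases hij with h | h
    · exact pair_comm n hn ν hν2 hbraid hfar t1 t1 htν htν hbase_tt i hi1 j h hj2
    · exact (pair_comm n hn ν hν2 hbraid hfar t1 t1 htν htν hbase_tt j hj1 i h hi2).symm
  · rw [tgen_eq]
    rcases hij with h | h
    · exact pair_comm n hn ν hν2 hbraid hfar s1 t1 hsν htν hbase_st i hi1 j h hj2
    · exact (pair_comm n hn ν hν2 hbraid hfar t1 s1 htν hsν hbase_ts j hj1 i h hi2).symm
end
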